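/- arXiv:1803.06402 — 6 statements merged into one kernel-verified Lean document; each statement's English description precedes it below -/
import Mathlib

section
/- Let $Z$ be a Banach space, $A$ a Fréchet differentiable map defined on a neighborhood of $0\in Z$, and $\Gamma$ a bounded linear operator on $Z$ such that $\mathrm{Id}-\Gamma$ is invertible. Suppose there exist $\rho>0$ and $\kappa\in(0,1)$ such that: (1) for each $z\in Z$ with $\|z\|\le\rho$, $\|(\mathrm{Id}-\Gamma)^{-1}\|\cdot\|d_zA-\Gamma\|\le\kappa$; (2) $\|(\mathrm{Id}-\Gamma)^{-1}\|\cdot\|A(0)\|\le(1-\kappa)\rho$. Then $A$ has a unique fixed point in the closed ball $\{z\in Z : \|z\|\le\rho\}$. -/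
/-!
Since `Id - Γ` is invertible, `A z = z` is equivalent to `z = (Id - Γ)⁻¹ (A z - Γ z)`. The
derivative of the right-hand side is `(Id - Γ)⁻¹ ∘ (d_z A - Γ)`, of norm at most `κ` on the ball,
so by the mean value inequality it is a `κ`-contraction there; the bound on `A 0` makes it map the
ball into itself, and the Banach fixed point theorem applies.
-/

open Set Metric NNReal

theorem LipschitzOnWith.existsUnique_fixedPoint {α : Type*} [MetricSpace α] {f : α → α}
    {s : Set α} {K : ℝ≥0} (hf : LipschitzOnWith K f s) (hK : K < 1) (hsf : MapsTo f s s)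
    (hsc : IsComplete s) (hs : s.Nonempty) : ∃! x, x ∈ s ∧ f x = x := by
  have hcontr : ContractingWith K (hsf.restrict f s s) := ⟨hK, hf.mapsToRestrict hsf⟩
  obtain ⟨x₀, hx₀⟩ := hs
  obtain ⟨x, hxs, hfx, -⟩ := hcontr.exists_fixedPoint' hsc hsf hx₀ (edist_ne_top _ _)
  refine ⟨x, ⟨hxs, hfx⟩, fun y ⟨hys, hfy⟩ => ?_⟩
  exact congrArg Subtype.val <|
    hcontr.fixedPoint_unique' (x := ⟨y, hys⟩) (y := ⟨x, hxs⟩) (Subtype.ext hfy) (Subtype.ext hfx)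

theorem LipschitzOnWith.mapsTo_closedBall {α : Type*} [PseudoMetricSpace α] {f : α → α}
    {c : α} {ρ : ℝ} {K : ℝ≥0} (hf : LipschitzOnWith K f (closedBall c ρ))
    (hc : dist (f c) c ≤ (1 - K) * ρ) : MapsTo f (closedBall c ρ) (closedBall c ρ) := by
  intro x hx
  have hc_mem : c ∈ closedBall c ρ := mem_closedBall_self (dist_nonneg.trans hx)
  calc dist (f x) c ≤ dist (f x) (f c) + dist (f c) c := dist_triangle _ _ _
    _ ≤ K * dist x c + (1 - K) * ρ := add_le_add (hf.dist_le_mul x hx c hc_mem) hc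
    _ ≤ K * ρ + (1 - K) * ρ := by gcongr; exact hx
    _ = ρ := by ring

section PreconditionedMap

variable {E F : Type*} [NormedAddCommGroup E] [NormedSpace ℝ E] [NormedAddCommGroup F]
  [NormedSpace ℝ F]

def preconditionedMap (G : F →L[ℝ] E) (Γ : E →L[ℝ] F) (A : E → F) (z : E) : E :=
  G (A z - Γ z)

theorem preconditionedMap_eq_self_iff {G Γ : E →L[ℝ] E} {A : E → E}
    (hGl : ∀ z, G ((ContinuousLinearMap.id ℝ E - Γ) z) = z)
    (hGr : ∀ z, (ContinuousLinearMap.id ℝ E - Γ) (G z) = z) (z : E) :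
    preconditionedMap G Γ A z = z ↔ A z = z := by
  constructor
  · intro h
    have := hGr (A z - Γ z)
    rw [show G (A z - Γ z) = z from h] at this
    simpa using this.symm
  · intro h
    simpa [preconditionedMap, h] using hGl z

theorem Convex.lipschitzOnWith_preconditionedMap {s : Set E} (hs : Convex ℝ s) {A : E → F}
    {A' : E → E →L[ℝ] F} (hA : ∀ z ∈ s, HasFDerivWithinAt A (A' z) s z) (G : F →L[ℝ] E)
    (Γ : E →L[ℝ] F) {K : ℝ≥0} (hK : ∀ z ∈ s, ‖G‖ * ‖A' z - Γ‖ ≤ K) :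
    LipschitzOnWith K (preconditionedMap G Γ A) s := by
  refine hs.lipschitzOnWith_of_nnnorm_hasFDerivWithin_le (f' := fun z => G.comp (A' z - Γ))
    (fun z hz => G.hasFDerivAt.comp_hasFDerivWithinAt z ((hA z hz).sub Γ.hasFDerivWithinAt))
    fun z hz => ?_
  rw [← NNReal.coe_le_coe, coe_nnnorm]
  exact (G.opNorm_comp_le _).trans (hK z hz)

end PreconditionedMap

theorem fixed_point_theorem_general {Z : Type*} [NormedAddCommGroup Z] [NormedSpace ℝ Z]
    [CompleteSpace Z] (ρ κ : ℝ) (hκ1 : κ < 1)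
    (A : Z → Z) (A' : Z → Z →L[ℝ] Z)
    (hdiff : ∀ z ∈ Metric.closedBall (0 : Z) ρ, HasFDerivAt A (A' z) z)
    (Γ G : Z →L[ℝ] Z)
    (hGl : ∀ z, G ((ContinuousLinearMap.id ℝ Z - Γ) z) = z)
    (hGr : ∀ z, (ContinuousLinearMap.id ℝ Z - Γ) (G z) = z)
    (h1 : ∀ z : Z, ‖z‖ ≤ ρ → ‖G‖ * ‖A' z - Γ‖ ≤ κ)
    (h2 : ‖G‖ * ‖A 0‖ ≤ (1 - κ) * ρ) :
    ∃! z : Z, ‖z‖ ≤ ρ ∧ A z = z := by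
  have hρ : 0 ≤ ρ :=
    nonneg_of_mul_nonneg_right ((mul_nonneg (norm_nonneg _) (norm_nonneg _)).trans h2)
      (sub_pos.2 hκ1)
  have hκ : 0 ≤ κ :=
    (mul_nonneg (norm_nonneg _) (norm_nonneg _)).trans (h1 0 (by simpa using hρ))
  set K : ℝ≥0 := ⟨κ, hκ⟩
  have hT : LipschitzOnWith K (preconditionedMap G Γ A) (closedBall 0 ρ) :=
    (convex_closedBall 0 ρ).lipschitzOnWith_preconditionedMap
      (fun z hz => (hdiff z hz).hasFDerivWithinAt) G Γ
      fun z hz => h1 z (mem_closedBall_zero_iff.1 hz)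
  have hT0 : dist (preconditionedMap G Γ A 0) 0 ≤ (1 - κ) * ρ := by
    simpa [preconditionedMap] using (G.le_opNorm (A 0)).trans h2
  simpa only [mem_closedBall_zero_iff, preconditionedMap_eq_self_iff hGl hGr] using
    hT.existsUnique_fixedPoint hκ1 (hT.mapsTo_closedBall hT0)
      isClosed_closedBall.isComplete ⟨0, mem_closedBall_self hρ⟩

/-- A consequence of the Banach fixed point theorem: if `A` is differentiable on the closed
ball of radius `ρ`, `Id - Γ` is invertible (with inverse `G`), the derivative of `A` is
`κ`-close to `Γ` (weighted by `‖G‖`) on the ball, and `‖G‖·‖A 0‖ ≤ (1-κ)ρ`, then `A` has a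
unique fixed point in the closed ball of radius `ρ`. -/
theorem fixed_point_theorem {Z : Type*} [NormedAddCommGroup Z] [NormedSpace ℝ Z]
    [CompleteSpace Z] (ρ κ : ℝ) (hρ : 0 < ρ) (hκ0 : 0 < κ) (hκ1 : κ < 1)
    (A : Z → Z) (A' : Z → Z →L[ℝ] Z)
    (hdiff : ∀ z ∈ Metric.closedBall (0 : Z) ρ, HasFDerivAt A (A' z) z)
    (Γ G : Z →L[ℝ] Z)
    (hGl : ∀ z, G ((ContinuousLinearMap.id ℝ Z - Γ) z) = z)
    (hGr : ∀ z, (ContinuousLinearMap.id ℝ Z - Γ) (G z) = z)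
    (h1 : ∀ z : Z, ‖z‖ ≤ ρ → ‖G‖ * ‖A' z - Γ‖ ≤ κ)
    (h2 : ‖G‖ * ‖A 0‖ ≤ (1 - κ) * ρ) :
    ∃! z : Z, ‖z‖ ≤ ρ ∧ A z = z :=
  fixed_point_theorem_general ρ κ hκ1 A A' hdiff Γ G hGl hGr h1 h2
end

section
/- Under the hypotheses of the nonautonomous shadowing theorem (with $B=\ell^\infty$), there exists $\varepsilon>0$ such that if $(x_n)_{n\in\mathbb{Z}}$ and $(z_n)_{n\in\mathbb{Z}}$ are both full trajectories of $x_{n+1}=A_nx_n+f_n(x_n)$ and $\sup_{n\in\mathbb{Z}}\|x_n-z_n\|\le\varepsilon$, then $x_n=z_n$ for all $n$ (expansivity). -/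
/-- The sequence `A` of bounded operators admits an exponential dichotomy: there exist
an evolution family `E`, projections `P` commuting with the dynamics and constants
`C, lam > 0` with the usual exponential bounds. -/
def ExpDichotomy {X : Type*} [NormedAddCommGroup X] [NormedSpace ℝ X]
    (A : ℤ → X →L[ℝ] X) : Prop :=
  ∃ (E : ℤ → ℤ → X →L[ℝ] X) (P : ℤ → X →L[ℝ] X) (C lam : ℝ),
    0 < C ∧ 0 < lam ∧
    (∀ n, E n n = ContinuousLinearMap.id ℝ X) ∧
    (∀ m n, E (m + 1) n = (A m).comp (E m n)) ∧
    (∀ m, (P m).comp (P m) = P m) ∧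
    (∀ m, (P (m + 1)).comp (A m) = (A m).comp (P m)) ∧
    (∀ m n, n ≤ m → ‖(E m n).comp (P n)‖ ≤ C * Real.exp (-lam * ((m - n : ℤ) : ℝ))) ∧
    (∀ m n, m ≤ n → ‖(E m n).comp (ContinuousLinearMap.id ℝ X - P n)‖ ≤
      C * Real.exp (-lam * ((n - m : ℤ) : ℝ)))

/-!
The difference `w = x - z` of two trajectories satisfies
`w (n + 1) = A n (w n) + (f n (x n) - f n (z n))`, and by the mean value inequality the last term
has norm at most `c * ‖w n‖`. Hahn–Banach writes it as `L n (w n)` with `‖L n‖ ≤ c`, so `w` is an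
orbit of the linear system `B = A + L`, which has an exponential dichotomy by robustness.
Robustness also makes every `B n` injective: if `‖A k v‖ ≤ c * ‖v‖` for some `v ≠ 0`, a rank-one
perturbation of `A k` of size `c` is not surjective, whereas the evolution family of a dichotomic
system provides right inverses. For injective `B` the evolution family also runs backwards along
orbits, so the stable part of a bounded orbit is controlled from the far past and its unstable
part from the far future; both vanish, hence `w = 0`.
-/

open Filter Topology ContinuousLinearMap

lemma eq_zero_of_forall_norm_le_mul_exp {X : Type*} [NormedAddCommGroup X] {ξ : X} {C lam : ℝ}
    (hlam : 0 < lam) (h : ∀ j : ℕ, ‖ξ‖ ≤ C * Real.exp (-lam * j)) : ξ = 0 := by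
  have hexp : Tendsto (fun j : ℕ => C * Real.exp (-lam * j)) atTop (𝓝 0) := by
    simpa using (Real.tendsto_exp_neg_atTop_nhds_zero.comp
      (tendsto_natCast_atTop_atTop.const_mul_atTop hlam)).const_mul C
  exact norm_le_zero_iff.mp (ge_of_tendsto' hexp h)

section

variable {X : Type*} [NormedAddCommGroup X] [NormedSpace ℝ X]

lemma exists_norm_le_apply_eq {c : ℝ} (hc : 0 ≤ c) {v y : X} (h : ‖y‖ ≤ c * ‖v‖) :
    ∃ L : X →L[ℝ] X, ‖L‖ ≤ c ∧ L v = y := by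
  rcases eq_or_ne v 0 with rfl | hv
  · exact ⟨0, by simpa using hc, by simp [show y = 0 by simpa using h]⟩
  have hv' : ‖v‖ ≠ 0 := norm_ne_zero_iff.mpr hv
  obtain ⟨ψ, hψ, hψv⟩ := exists_dual_vector ℝ v hv'
  replace hψv : ψ v = ‖v‖ := by exact_mod_cast hψv
  refine ⟨ψ.smulRight (‖v‖⁻¹ • y), ?_, ?_⟩
  · rw [norm_smulRight_apply, hψ, one_mul, norm_smul, norm_inv, norm_norm]
    calc ‖v‖⁻¹ * ‖y‖ ≤ ‖v‖⁻¹ * (c * ‖v‖) := by gcongr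
      _ = c := by field_simp
  · simp [hψv, smul_smul, hv']

lemma exists_not_surjective_norm_sub_le {T : X →L[ℝ] X} (hT : Function.Injective T) {c : ℝ}
    {v : X} (hv : v ≠ 0) (h : ‖T v‖ ≤ c * ‖v‖) :
    ∃ S : X →L[ℝ] X, ‖T - S‖ ≤ c ∧ ¬ Function.Surjective S := by
  have hv' : ‖v‖ ≠ 0 := norm_ne_zero_iff.mpr hv
  obtain ⟨ψ, hψ, hψv⟩ := exists_dual_vector ℝ v hv'
  replace hψv : ψ v = ‖v‖ := by exact_mod_cast hψv
  -- `S = T ∘ (1 - ‖v‖⁻¹ ψ ⊗ v)` factors through the kernel of `ψ`, so its range misses `T v`.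
  set L : X →L[ℝ] X := ψ.smulRight (‖v‖⁻¹ • T v)
  refine ⟨T - L, ?_, fun hS => ?_⟩
  · rw [sub_sub_cancel, norm_smulRight_apply, hψ, one_mul, norm_smul, norm_inv, norm_norm]
    calc ‖v‖⁻¹ * ‖T v‖ ≤ ‖v‖⁻¹ * (c * ‖v‖) := by gcongr
      _ = c := by field_simp
  obtain ⟨u, hu⟩ := hS (T v)
  have huv : u - (‖v‖⁻¹ * ψ u) • v = v := hT <| by
    simpa [L, map_sub, map_smul, smul_smul, mul_comm] using hu
  have hψuv := congrArg ψ huv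
  simp only [map_sub, map_smul, hψv, smul_eq_mul] at hψuv
  field_simp at hψuv
  exact hv' (by linarith)

lemma ExpDichotomy.surjective {B : ℤ → X →L[ℝ] X} (hB : ExpDichotomy B) (k : ℤ) :
    Function.Surjective (B k) := by
  obtain ⟨E, -, -, -, -, -, hE1, hE2, -⟩ := hB
  refine fun y => ⟨E k (k + 1) y, ?_⟩
  simpa using congrArg (· y) ((hE2 k (k + 1)).symm.trans (hE1 (k + 1)))

lemma lt_norm_apply_of_robust {A : ℤ → X →L[ℝ] X} (hA : ∀ k, Function.Injective (A k))
    {c : ℝ} (hrobust : ∀ B : ℤ → X →L[ℝ] X, (∀ m, ‖A m - B m‖ ≤ c) → ExpDichotomy B)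
    (k : ℤ) {v : X} (hv : v ≠ 0) : c * ‖v‖ < ‖A k v‖ := by
  by_contra! hle
  obtain ⟨S, hS, hnot⟩ := exists_not_surjective_norm_sub_le (hA k) hv hle
  have hc : 0 ≤ c := (norm_nonneg _).trans hS
  have hdich : ExpDichotomy (Function.update A k S) := hrobust _ fun m => by
    rcases eq_or_ne m k with rfl | hm
    · simpa using hS
    · simpa [hm] using hc
  exact hnot (by simpa using hdich.surjective k)

lemma injective_of_robust {A B : ℤ → X →L[ℝ] X} (hA : ∀ k, Function.Injective (A k)) {c : ℝ}
    (hrobust : ∀ B : ℤ → X →L[ℝ] X, (∀ m, ‖A m - B m‖ ≤ c) → ExpDichotomy B)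
    (hAB : ∀ m, ‖A m - B m‖ ≤ c) (k : ℤ) : Function.Injective (B k) := by
  refine (injective_iff_map_eq_zero (B k)).mpr fun v hv => ?_
  by_contra hv0
  have hlower := lt_norm_apply_of_robust hA hrobust k hv0
  have hupper := (A k - B k).le_of_opNorm_le (hAB k) v
  rw [sub_apply, hv, sub_zero] at hupper
  linarith

def IsOrbit (B : ℤ → X →L[ℝ] X) (w : ℤ → X) : Prop :=
  ∀ n, w (n + 1) = B n (w n)

lemma IsOrbit.map {B P : ℤ → X →L[ℝ] X} {w : ℤ → X} (hw : IsOrbit B w)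
    (hPB : ∀ m, (P (m + 1)).comp (B m) = (B m).comp (P m)) : IsOrbit B fun n => P n (w n) :=
  fun n => by simp only [hw n, ← comp_apply, hPB n]

section EvolutionFamily

variable {B : ℤ → X →L[ℝ] X} {E : ℤ → ℤ → X →L[ℝ] X}
  (hE1 : ∀ n, E n n = ContinuousLinearMap.id ℝ X)
  (hE2 : ∀ m n, E (m + 1) n = (B m).comp (E m n))
  {w : ℤ → X}
include hE1 hE2

lemma IsOrbit.evolution_apply_of_le (hw : IsOrbit B w) {m n : ℤ} (hnm : n ≤ m) :
    E m n (w n) = w m := by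
  induction m, hnm using Int.leInduction with
  | base => rw [hE1]; rfl
  | succ m _ ih => rw [hE2, comp_apply, ih, hw]

lemma IsOrbit.evolution_apply_of_ge (hB : ∀ n, Function.Injective (B n)) (hw : IsOrbit B w)
    {m n : ℤ} (hmn : m ≤ n) : E m n (w n) = w m := by
  induction m, hmn using Int.leInductionDown with
  | base => rw [hE1]; rfl
  | pred m _ ih =>
    apply hB (m - 1)
    rw [← comp_apply, ← hE2, sub_add_cancel, ih, ← hw, sub_add_cancel]

end EvolutionFamily

lemma ExpDichotomy.eq_zero_of_isOrbit {B : ℤ → X →L[ℝ] X} (hB : ExpDichotomy B)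
    (hinj : ∀ n, Function.Injective (B n)) {w : ℤ → X} (hw : IsOrbit B w) {K : ℝ}
    (hK : ∀ n, ‖w n‖ ≤ K) : w = 0 := by
  obtain ⟨E, P, C, lam, -, hlam, hE1, hE2, -, hPB, hstable, hunstable⟩ := hB
  have hPw (m : ℤ) : P m (w m) = 0 := by
    refine eq_zero_of_forall_norm_le_mul_exp (C := C * K) hlam fun j => ?_
    calc ‖P m (w m)‖ = ‖(E m (m - j)).comp (P (m - j)) (w (m - j))‖ := by
          rw [comp_apply, (hw.map hPB).evolution_apply_of_le hE1 hE2 (by omega)]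
      _ ≤ C * Real.exp (-lam * ((m - (m - j) : ℤ) : ℝ)) * K :=
          le_of_opNorm_le_of_le _ (hstable _ _ (by omega)) (hK _)
      _ = C * K * Real.exp (-lam * j) := by push_cast; ring_nf
  funext n
  refine eq_zero_of_forall_norm_le_mul_exp (C := C * K) hlam fun j => ?_
  calc ‖w n‖ = ‖(E n (n + j)).comp (ContinuousLinearMap.id ℝ X - P (n + j)) (w (n + j))‖ := by
        rw [comp_apply, sub_apply, hPw, sub_zero, id_apply,
          hw.evolution_apply_of_ge hE1 hE2 hinj (by omega)]
    _ ≤ C * Real.exp (-lam * ((n + j - n : ℤ) : ℝ)) * K :=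
        le_of_opNorm_le_of_le _ (hunstable _ _ (by omega)) (hK _)
    _ = C * K * Real.exp (-lam * j) := by push_cast; ring_nf

end

theorem nonautonomous_expansivity_general {X : Type*} [NormedAddCommGroup X]
    [NormedSpace ℝ X]
    (A : ℤ → X ≃L[ℝ] X)
    (c : ℝ) (hc : 0 < c)
    (hrobust : ∀ B : ℤ → X →L[ℝ] X,
      (∀ m, ‖(A m : X →L[ℝ] X) - B m‖ ≤ c) → ExpDichotomy B)
    (f : ℤ → X → X) (f' : ℤ → X → X →L[ℝ] X)
    (hdf : ∀ n x, HasFDerivAt (f n) (f' n x) x)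
    (hfc : ∀ n x, ‖f' n x‖ ≤ c) :
    ∃ ε > (0 : ℝ), ∀ x z : ℤ → X,
      (∀ n, x (n + 1) = A n (x n) + f n (x n)) →
      (∀ n, z (n + 1) = A n (z n) + f n (z n)) →
      (∀ n, ‖x n - z n‖ ≤ ε) → x = z := by
  refine ⟨1, one_pos, fun x z hx hz hclose => ?_⟩
  have hlip (n : ℤ) : ‖f n (x n) - f n (z n)‖ ≤ c * ‖x n - z n‖ := by
    simpa using convex_univ.norm_image_sub_le_of_norm_hasFDerivWithin_le
      (fun y _ => (hdf n y).hasFDerivWithinAt) (fun y _ => hfc n y) (Set.mem_univ (z n))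
      (Set.mem_univ (x n))
  choose L hL hLw using fun n => exists_norm_le_apply_eq hc.le (hlip n)
  set B : ℤ → X →L[ℝ] X := fun n => (A n : X →L[ℝ] X) + L n
  have hAB (n : ℤ) : ‖(A n : X →L[ℝ] X) - B n‖ ≤ c := by simpa [B] using hL n
  have horbit : IsOrbit B (x - z) := fun n => by
    rw [Pi.sub_apply, Pi.sub_apply, hx, hz, add_apply, hLw, ContinuousLinearEquiv.coe_coe,
      map_sub]
    abel
  have hinj := injective_of_robust (fun k => (A k).injective) hrobust hAB
  exact sub_eq_zero.mp ((hrobust B hAB).eq_zero_of_isOrbit hinj horbit hclose)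

/-- Expansivity: two full trajectories of the perturbed system that stay uniformly
`ε`-close must coincide. -/
theorem nonautonomous_expansivity {X : Type*} [NormedAddCommGroup X]
    [NormedSpace ℝ X] [CompleteSpace X]
    (A : ℤ → X ≃L[ℝ] X) (M : ℝ) (hM : ∀ m, ‖(A m : X →L[ℝ] X)‖ ≤ M)
    (hED : ExpDichotomy fun m => (A m : X →L[ℝ] X))
    (c : ℝ) (hc : 0 < c)
    (hrobust : ∀ B : ℤ → X →L[ℝ] X,
      (∀ m, ‖(A m : X →L[ℝ] X) - B m‖ ≤ c) → ExpDichotomy B)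
    (f : ℤ → X → X) (f' : ℤ → X → X →L[ℝ] X)
    (hdf : ∀ n x, HasFDerivAt (f n) (f' n x) x)
    (hfc : ∀ n x, ‖f' n x‖ ≤ c)
    (Mf : ℝ) (hMf : ∀ n x, ‖f n x‖ ≤ Mf)
    (D r : ℝ) (hD : 0 < D) (hr : 0 < r)
    (hHolder : ∀ n x y, ‖f' n x - f' n y‖ ≤ D * ‖x - y‖ ^ r) :
    ∃ ε > (0 : ℝ), ∀ x z : ℤ → X,
      (∀ n, x (n + 1) = A n (x n) + f n (x n)) →
      (∀ n, z (n + 1) = A n (z n) + f n (z n)) →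
      (∀ n, ‖x n - z n‖ ≤ ε) → x = z :=
  nonautonomous_expansivity_general A c hc hrobust f f' hdf hfc
end

section
/- Let $(A_m)_{m\in\mathbb{Z}}$ be a uniformly bounded sequence of invertible bounded operators on a Banach space $X$ admitting an exponential dichotomy. Then the linear system $x_{n+1}=A_nx_n$ has the $B$-Lipschitz shadowing property for any admissible Banach sequence space $B$, and moreover for every $\varepsilon>0$ the shadowing trajectory is unique: if $(x_n)$ and $(x_n')$ both solve $x_{n+1}=A_nx_n$ with $\|(x_n-y_n)_n\|_B\le\varepsilon$ and $\|(x_n'-y_n)_n\|_B\le\varepsilon$, then $x_n=x_n'$ for all $n$. -/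
/-- A Banach sequence space over `ℤ`: a linear subspace of real sequences with a
complete, monotone norm. -/
structure BanachSeqSpace where
  Mem : (ℤ → ℝ) → Prop
  norm : (ℤ → ℝ) → ℝ
  zero_mem : Mem 0
  add_mem : ∀ s t, Mem s → Mem t → Mem (s + t)
  smul_mem : ∀ (c : ℝ) (s), Mem s → Mem (c • s)
  norm_nonneg : ∀ s, Mem s → 0 ≤ norm s
  norm_eq_zero : ∀ s, Mem s → norm s = 0 → s = 0
  norm_add_le : ∀ s t, Mem s → Mem t → norm (s + t) ≤ norm s + norm t
  norm_smul : ∀ (c : ℝ) (s), Mem s → norm (c • s) = |c| * norm s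
  mono_mem : ∀ s t, Mem t → (∀ n, |s n| ≤ |t n|) → Mem s
  mono_norm : ∀ s t, Mem s → Mem t → (∀ n, |s n| ≤ |t n|) → norm s ≤ norm t
  complete : ∀ u : ℕ → (ℤ → ℝ), (∀ k, Mem (u k)) →
    (∀ ε : ℝ, 0 < ε → ∃ N, ∀ j k, N ≤ j → N ≤ k → norm (u j - u k) ≤ ε) →
    ∃ s, Mem s ∧ Filter.Tendsto (fun k => norm (u k - s)) Filter.atTop (nhds 0)

/-- An admissible Banach sequence space: contains the indicators of singletons (with
positive norm) and is invariant under shifts, with equal norms. -/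
structure AdmissibleSeqSpace extends BanachSeqSpace where
  indicator_mem : ∀ n : ℤ, Mem (Set.indicator ({n} : Set ℤ) fun _ => (1 : ℝ))
  indicator_pos : ∀ n : ℤ, 0 < norm (Set.indicator ({n} : Set ℤ) fun _ => (1 : ℝ))
  shift_mem : ∀ (s : ℤ → ℝ) (m : ℤ), Mem s → Mem fun n => s (n + m)
  shift_norm : ∀ (s : ℤ → ℝ) (m : ℤ), Mem s → norm (fun n => s (n + m)) = norm s

/-- Membership in `X_B`. -/
def MemXB {X : Type*} [NormedAddCommGroup X] (B : BanachSeqSpace) (x : ℤ → X) : Prop :=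
  B.Mem fun n => ‖x n‖

/-- The norm on `X_B`. -/
def normXB {X : Type*} [NormedAddCommGroup X] (B : BanachSeqSpace) (x : ℤ → X) : ℝ :=
  B.norm fun n => ‖x n‖

/-!
For `j < n` put `G n j = E n (j+1) ∘ P (j+1)`, and `G n j = -E n (j+1) ∘ (1 - P (j+1))` otherwise.
The dichotomy bounds give `‖G n j‖ ≤ C e^{-λ|n-j-1|}`, and `w n = ∑ⱼ G n j (d j)` solves
`w (n+1) = A n (w n) + d n`. Pointwise `‖w n‖` is dominated by the convolution of `‖d‖` with a
summable kernel; as the norm of `B` is complete, monotone and shift-invariant, such a convolution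
lies in `B` with norm at most `(∑ kernel) · ‖d‖_B`. With `d` the defect of `y`, `y - w` is a
true orbit `B`-close to `y`.

For uniqueness, the indicator condition makes point evaluations bounded on `B`, so two orbits
shadowing `y` differ by a bounded orbit; pushing the stable part forward and the unstable part
backward in time along the dichotomy forces a bounded orbit to vanish.
-/

open Filter Topology

namespace BanachSeqSpace

variable (B : BanachSeqSpace)

lemma neg_mem {s : ℤ → ℝ} (hs : B.Mem s) : B.Mem (-s) := by
  simpa using B.smul_mem (-1) s hs

lemma norm_zero : B.norm 0 = 0 := by
  simpa using B.norm_smul 0 0 B.zero_mem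

def toAddSubgroup : AddSubgroup (ℤ → ℝ) where
  carrier := {s | B.Mem s}
  zero_mem' := B.zero_mem
  add_mem' := B.add_mem _ _
  neg_mem' := B.neg_mem

/-- A type synonym: the subtype itself carries the product topology of `ℤ → ℝ`. -/
def Elem : Type := B.toAddSubgroup

instance : AddCommGroup B.Elem := inferInstanceAs (AddCommGroup B.toAddSubgroup)

variable {B} in
@[simp] lemma Elem.coe_neg (s : B.Elem) : (-s).1 = -s.1 := rfl

variable {B} in
@[simp] lemma Elem.coe_sub (s t : B.Elem) : (s - t).1 = s.1 - t.1 := rfl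

instance : NormedAddCommGroup B.Elem := AddGroupNorm.toNormedAddCommGroup
  { toFun := fun s => B.norm s.1
    map_zero' := B.norm_zero
    add_le' := fun s t => B.norm_add_le _ _ s.2 t.2
    neg' := fun s => by simpa using B.norm_smul (-1) _ s.2
    eq_zero_of_map_eq_zero' := fun s hs => Subtype.ext (B.norm_eq_zero _ s.2 hs) }

variable {B} in
lemma Elem.mem (s : B.Elem) : B.Mem s.1 := s.2

variable {B} in
lemma Elem.norm_def (s : B.Elem) : ‖s‖ = B.norm s.1 := rfl

instance : CompleteSpace B.Elem := by
  refine Metric.complete_of_cauchySeq_tendsto fun u hu => ?_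
  obtain ⟨s, hs, hlim⟩ := B.complete (fun k => (u k).1) (fun k => (u k).2)
    fun ε hε => (Metric.cauchySeq_iff.1 hu ε hε).imp fun N hN j k hj hk => by
      simpa [dist_eq_norm, Elem.norm_def] using (hN j hj k hk).le
  exact ⟨⟨s, hs⟩, tendsto_iff_norm_sub_tendsto_zero.2 hlim⟩

end BanachSeqSpace

namespace AdmissibleSeqSpace

variable (B : AdmissibleSeqSpace)

noncomputable def unitNorm : ℝ := B.norm (Set.indicator {0} fun _ => 1)

lemma unitNorm_pos : 0 < B.unitNorm := B.indicator_pos 0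

lemma norm_indicator_singleton (n : ℤ) :
    B.norm (Set.indicator {n} fun _ => 1) = B.unitNorm := by
  have hshift : (Set.indicator {n} fun _ => (1 : ℝ)) =
      fun k => Set.indicator {0} (fun _ => (1 : ℝ)) (k + -n) := by
    ext k
    simp [Set.indicator_apply, ← sub_eq_add_neg, sub_eq_zero]
  rw [hshift, B.shift_norm _ _ (B.indicator_mem 0), unitNorm]

lemma unitNorm_mul_abs_le {s : ℤ → ℝ} (hs : B.Mem s) (n : ℤ) :
    B.unitNorm * |s n| ≤ B.norm s := by
  have hle : ∀ k, |(s n • Set.indicator {n} fun _ => (1 : ℝ)) k| ≤ |s k| := by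
    intro k
    by_cases hk : k = n <;> simp [hk]
  have := B.mono_norm _ s (B.smul_mem _ _ (B.indicator_mem n)) hs hle
  rwa [B.norm_smul _ _ (B.indicator_mem n), norm_indicator_singleton, mul_comm] at this

lemma abs_le_norm_div {s : ℤ → ℝ} (hs : B.Mem s) (n : ℤ) :
    |s n| ≤ B.norm s / B.unitNorm := by
  rw [le_div_iff₀ B.unitNorm_pos, mul_comm]
  exact B.unitNorm_mul_abs_le hs n

def evalAddHom (n : ℤ) : B.Elem →+ ℝ where
  toFun s := s.1 n
  map_zero' := rfl
  map_add' _ _ := rfl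

@[simp] lemma evalAddHom_apply (n : ℤ) (s : B.Elem) : B.evalAddHom n s = s.1 n := rfl

lemma continuous_evalAddHom (n : ℤ) : Continuous (B.evalAddHom n) :=
  AddMonoidHomClass.continuous_of_bound _ B.unitNorm⁻¹ fun s => by
    simpa [div_eq_inv_mul, BanachSeqSpace.Elem.norm_def] using B.abs_le_norm_div s.2 n

lemma mem_tsum_and_norm_tsum_le {ι : Type*} {f : ι → ℤ → ℝ} (hf : ∀ i, B.Mem (f i))
    (hsum : Summable fun i => B.norm (f i)) :
    B.Mem (fun n => ∑' i, f i n) ∧ B.norm (fun n => ∑' i, f i n) ≤ ∑' i, B.norm (f i) := by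
  let F : ι → B.Elem := fun i => ⟨f i, hf i⟩
  have hF : Summable F := Summable.of_norm (f := F) hsum
  have hval : (fun n => ∑' i, f i n) = (∑' i, F i).1 := funext fun n => by
    have := hF.hasSum.map (B.evalAddHom n) (B.continuous_evalAddHom n)
    simp only [Function.comp_def, evalAddHom_apply] at this
    exact this.tsum_eq
  rw [hval]
  exact ⟨BanachSeqSpace.Elem.mem _, norm_tsum_le_tsum_norm (f := F) hsum⟩

lemma mem_conv_and_norm_conv_le {k : ℤ → ℝ} (hk0 : 0 ≤ k) (hk : Summable k) {s : ℤ → ℝ}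
    (hs : B.Mem s) :
    B.Mem (fun n => ∑' i, k i * s (n - i)) ∧
      B.norm (fun n => ∑' i, k i * s (n - i)) ≤ (∑' i, k i) * B.norm s := by
  have hshift : ∀ i, B.Mem (fun n => s (n - i)) ∧ B.norm (fun n => s (n - i)) = B.norm s :=
    fun i => by simpa only [sub_eq_add_neg] using ⟨B.shift_mem s (-i) hs, B.shift_norm s (-i) hs⟩
  have hnorm : ∀ i, B.norm (k i • fun n => s (n - i)) = k i * B.norm s := fun i => by
    rw [B.norm_smul _ _ (hshift i).1, (hshift i).2, abs_of_nonneg (hk0 i)]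
  have := B.mem_tsum_and_norm_tsum_le (fun i => B.smul_mem (k i) _ (hshift i).1)
    (by simpa only [hnorm] using hk.mul_right _)
  simpa only [hnorm, tsum_mul_right, Pi.smul_apply, smul_eq_mul] using this

lemma norm_le_normXB_div {X : Type*} [NormedAddCommGroup X] {x : ℤ → X}
    (hx : MemXB B.toBanachSeqSpace x) (n : ℤ) :
    ‖x n‖ ≤ normXB B.toBanachSeqSpace x / B.unitNorm := by
  simpa [normXB] using B.abs_le_norm_div hx n

end AdmissibleSeqSpace

section Dichotomy

variable {X : Type*} [NormedAddCommGroup X] [NormedSpace ℝ X]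

lemma solution_eq_of_eq {A : ℤ → X →L[ℝ] X} (hA : ∀ m, Function.Injective (A m))
    {u v : ℤ → X} (hu : ∀ m, u (m + 1) = A m (u m)) (hv : ∀ m, v (m + 1) = A m (v m))
    {n : ℤ} (h : u n = v n) : u = v := by
  funext m
  induction m using Int.inductionOn' (b := n) with
  | zero => exact h
  | succ k _ ih => rw [hu, hv, ih]
  | pred k _ ih =>
    refine hA (k - 1) ?_
    rw [← hu, ← hv, sub_add_cancel, ih]

lemma nonpos_of_le_mul_exp_neg {a K lam : ℝ} (hlam : 0 < lam)
    (h : ∀ t : ℕ, a ≤ K * Real.exp (-lam * t)) : a ≤ 0 := by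
  have hdecay : Tendsto (fun t : ℕ => K * Real.exp (-lam * t)) atTop (𝓝 0) := by
    simpa using (Real.tendsto_exp_atBot.comp
      (tendsto_natCast_atTop_atTop.const_mul_atTop_of_neg (neg_neg_of_pos hlam))).const_mul K
  exact ge_of_tendsto' hdecay h

lemma norm_apply_le_mul_exp {f : X →L[ℝ] X} {x : X} {C R lam s : ℝ} (hC : 0 ≤ C)
    (hf : ‖f‖ ≤ C * Real.exp (-lam * s)) (hx : ‖x‖ ≤ R) : ‖f x‖ ≤ C * R * Real.exp (-lam * s) :=
  calc ‖f x‖ ≤ C * Real.exp (-lam * s) * R :=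
        (f.le_opNorm x).trans (mul_le_mul hf hx (norm_nonneg x) (by positivity))
    _ = C * R * Real.exp (-lam * s) := by ring

structure IsDichotomy (A : ℤ → X →L[ℝ] X) (E : ℤ → ℤ → X →L[ℝ] X) (P : ℤ → X →L[ℝ] X)
    (C lam : ℝ) : Prop where
  C_pos : 0 < C
  lam_pos : 0 < lam
  evol_self : ∀ n, E n n = ContinuousLinearMap.id ℝ X
  evol_succ : ∀ m n, E (m + 1) n = (A m).comp (E m n)
  proj_comm : ∀ m, (P (m + 1)).comp (A m) = (A m).comp (P m)
  stable : ∀ m n, n ≤ m → ‖(E m n).comp (P n)‖ ≤ C * Real.exp (-lam * ((m - n : ℤ) : ℝ))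
  unstable : ∀ m n, m ≤ n →
    ‖(E m n).comp (ContinuousLinearMap.id ℝ X - P n)‖ ≤ C * Real.exp (-lam * ((n - m : ℤ) : ℝ))

lemma ExpDichotomy.exists_isDichotomy {A : ℤ → X →L[ℝ] X} (h : ExpDichotomy A) :
    ∃ E P C lam, IsDichotomy A E P C lam := by
  obtain ⟨E, P, C, lam, hC, hlam, hself, hsucc, -, hcomm, hs, hu⟩ := h
  exact ⟨E, P, C, lam, hC, hlam, hself, hsucc, hcomm, hs, hu⟩

def green (E : ℤ → ℤ → X →L[ℝ] X) (P : ℤ → X →L[ℝ] X) (n j : ℤ) : X →L[ℝ] X :=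
  if j + 1 ≤ n then (E n (j + 1)).comp (P (j + 1))
  else -(E n (j + 1)).comp (ContinuousLinearMap.id ℝ X - P (j + 1))

noncomputable def greenBound (C lam : ℝ) (i : ℤ) : ℝ := C * Real.exp (-lam * |(i : ℝ) - 1|)

lemma summable_exp_neg_mul_abs {lam : ℝ} (hlam : 0 < lam) :
    Summable fun i : ℤ => Real.exp (-lam * |(i : ℝ)|) := by
  have hnat : Summable fun n : ℕ => Real.exp (n * -lam) :=
    Real.summable_exp_nat_mul_iff.2 (neg_neg_of_pos hlam)
  refine Summable.of_nat_of_neg ?_ ?_ <;> refine hnat.congr fun n => ?_ <;> simp [mul_comm]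

lemma summable_greenBound (C : ℝ) {lam : ℝ} (hlam : 0 < lam) : Summable (greenBound C lam) := by
  have := ((Equiv.subRight (1 : ℤ)).summable_iff.2 (summable_exp_neg_mul_abs hlam)).mul_left C
  exact this.congr fun i => by simp [greenBound]

lemma greenBound_nonneg {C : ℝ} (hC : 0 ≤ C) (lam : ℝ) (i : ℤ) : 0 ≤ greenBound C lam i := by
  unfold greenBound
  positivity

lemma tsum_greenBound_pos {C lam : ℝ} (hC : 0 < C) (hlam : 0 < lam) :
    0 < ∑' i, greenBound C lam i :=
  (summable_greenBound C hlam).tsum_pos (greenBound_nonneg hC.le lam) 0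
    (mul_pos hC (Real.exp_pos _))

noncomputable def greenSolution (E : ℤ → ℤ → X →L[ℝ] X) (P : ℤ → X →L[ℝ] X) (d : ℤ → X)
    (n : ℤ) : X :=
  ∑' j, green E P n j (d j)

namespace IsDichotomy

variable {A : ℤ → X →L[ℝ] X} {E : ℤ → ℤ → X →L[ℝ] X} {P : ℤ → X →L[ℝ] X} {C lam : ℝ}

lemma evol_succ_apply (hD : IsDichotomy A E P C lam) (n : ℤ) (v : X) (m : ℤ) :
    E (m + 1) n v = A m (E m n v) := by
  rw [hD.evol_succ]; rfl

lemma eq_evol_of_solution (hD : IsDichotomy A E P C lam) (hA : ∀ m, Function.Injective (A m))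
    {z : ℤ → X} (hz : ∀ m, z (m + 1) = A m (z m)) (m n : ℤ) : z m = E m n (z n) := by
  have := solution_eq_of_eq hA hz (v := fun k => E k n (z n)) (hD.evol_succ_apply n (z n))
    (n := n) (by rw [hD.evol_self]; rfl)
  exact congrFun this m

lemma proj_comp_evol (hD : IsDichotomy A E P C lam) (hA : ∀ m, Function.Injective (A m))
    (m n : ℤ) : (P m).comp (E m n) = (E m n).comp (P n) := by
  ext v
  have hsol : ∀ k, P (k + 1) (E (k + 1) n v) = A k (P k (E k n v)) := fun k => by
    rw [hD.evol_succ_apply, ← ContinuousLinearMap.comp_apply, hD.proj_comm]; rfl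
  simpa [hD.evol_self] using hD.eq_evol_of_solution hA (z := fun k => P k (E k n v)) hsol m n

lemma compl_proj_comp_evol (hD : IsDichotomy A E P C lam) (hA : ∀ m, Function.Injective (A m))
    (m n : ℤ) : (ContinuousLinearMap.id ℝ X - P m).comp (E m n) =
      (E m n).comp (ContinuousLinearMap.id ℝ X - P n) := by
  rw [ContinuousLinearMap.sub_comp, ContinuousLinearMap.comp_sub, hD.proj_comp_evol hA]
  rfl

lemma eq_zero_of_bounded_solution (hD : IsDichotomy A E P C lam)
    (hA : ∀ m, Function.Injective (A m)) {z : ℤ → X} (hz : ∀ m, z (m + 1) = A m (z m))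
    {R : ℝ} (hR : ∀ n, ‖z n‖ ≤ R) : z = 0 := by
  funext n
  have hstable : ‖P n (z n)‖ ≤ 0 := nonpos_of_le_mul_exp_neg hD.lam_pos fun t => by
    rw [hD.eq_evol_of_solution hA hz n (n - t), ← ContinuousLinearMap.comp_apply,
      hD.proj_comp_evol hA]
    exact norm_apply_le_mul_exp hD.C_pos.le (by simpa using hD.stable n (n - t) (by omega)) (hR _)
  have hunstable : ‖(ContinuousLinearMap.id ℝ X - P n) (z n)‖ ≤ 0 :=
    nonpos_of_le_mul_exp_neg hD.lam_pos fun t => by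
    rw [hD.eq_evol_of_solution hA hz n (n + t), ← ContinuousLinearMap.comp_apply,
      hD.compl_proj_comp_evol hA]
    exact norm_apply_le_mul_exp hD.C_pos.le (by simpa using hD.unstable n (n + t) (by omega))
      (hR _)
  have hsplit : z n = P n (z n) + (ContinuousLinearMap.id ℝ X - P n) (z n) := by simp
  rw [hsplit, norm_le_zero_iff.1 hstable, norm_le_zero_iff.1 hunstable, add_zero, Pi.zero_apply]

lemma norm_green_le (hD : IsDichotomy A E P C lam) (n j : ℤ) :
    ‖green E P n j‖ ≤ greenBound C lam (n - j) := by
  unfold green greenBound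
  split_ifs with h
  · convert hD.stable n (j + 1) h using 4
    push_cast
    rw [abs_of_nonneg (by exact_mod_cast (by omega : (0 : ℤ) ≤ n - j - 1))]
    ring
  · rw [norm_neg]
    convert hD.unstable n (j + 1) (by omega) using 4
    push_cast
    rw [abs_of_nonpos (by exact_mod_cast (by omega : n - j - 1 ≤ (0 : ℤ)))]
    ring

lemma green_succ_sub (hD : IsDichotomy A E P C lam) (n j : ℤ) :
    green E P (n + 1) j - (A n).comp (green E P n j) =
      if j = n then ContinuousLinearMap.id ℝ X else 0 := by
  have hcomp : ∀ k, (A n).comp (E n k) = E (n + 1) k := fun k => (hD.evol_succ n k).symm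
  unfold green
  split_ifs with h₁ h₂ h₃ h₃ h₂ h₃ <;> try omega
  all_goals simp only [ContinuousLinearMap.comp_neg, ← ContinuousLinearMap.comp_assoc, hcomp,
    sub_self, sub_neg_eq_add]
  subst h₃
  rw [hD.evol_self, ContinuousLinearMap.id_comp, ContinuousLinearMap.id_comp, add_sub_cancel]

lemma summable_green_apply (hD : IsDichotomy A E P C lam) [CompleteSpace X] {d : ℤ → X}
    {D : ℝ} (hd : ∀ j, ‖d j‖ ≤ D) (n : ℤ) : Summable fun j => green E P n j (d j) := by
  refine .of_norm_bounded
    (((Equiv.subLeft n).summable_iff.2 (summable_greenBound C hD.lam_pos)).mul_right D) fun j => ?_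
  exact (ContinuousLinearMap.le_opNorm _ _).trans (mul_le_mul (hD.norm_green_le n j) (hd j)
    (norm_nonneg _) (greenBound_nonneg hD.C_pos.le lam _))

lemma greenSolution_succ (hD : IsDichotomy A E P C lam) [CompleteSpace X] {d : ℤ → X}
    {D : ℝ} (hd : ∀ j, ‖d j‖ ≤ D) (n : ℤ) :
    greenSolution E P d (n + 1) = A n (greenSolution E P d n) + d n := by
  have hsum := hD.summable_green_apply hd
  rw [← sub_eq_iff_eq_add', greenSolution, greenSolution, (A n).map_tsum (hsum n),
    ← (hsum (n + 1)).tsum_sub ((hsum n).mapL (A n))]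
  have hterm : ∀ j, green E P (n + 1) j (d j) - A n (green E P n j (d j)) =
      if j = n then d n else 0 := fun j => by
    split_ifs with h <;> simpa [h] using DFunLike.congr_fun (hD.green_succ_sub n j) (d j)
  rw [tsum_congr hterm, tsum_ite_eq]

lemma norm_greenSolution_le (hD : IsDichotomy A E P C lam) {d : ℤ → X} {D : ℝ}
    (hd : ∀ j, ‖d j‖ ≤ D) (n : ℤ) :
    ‖greenSolution E P d n‖ ≤ ∑' i, greenBound C lam i * ‖d (n - i)‖ := by
  have hsum : Summable fun i => greenBound C lam i * ‖d (n - i)‖ :=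
    .of_nonneg_of_le (fun i => mul_nonneg (greenBound_nonneg hD.C_pos.le lam i) (norm_nonneg _))
      (fun i => mul_le_mul_of_nonneg_left (hd _) (greenBound_nonneg hD.C_pos.le lam i))
      ((summable_greenBound C hD.lam_pos).mul_right D)
  refine tsum_of_norm_bounded (g := fun j => greenBound C lam (n - j) * ‖d j‖)
    ((Equiv.subLeft n).hasSum_iff.1 ?_) fun j => ?_
  · simpa [Function.comp_def] using hsum.hasSum
  · exact (ContinuousLinearMap.le_opNorm _ _).trans
      (mul_le_mul_of_nonneg_right (hD.norm_green_le n j) (norm_nonneg _))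

theorem exists_solution_memXB (hD : IsDichotomy A E P C lam) [CompleteSpace X]
    (B : AdmissibleSeqSpace) {d : ℤ → X} (hd : MemXB B.toBanachSeqSpace d) :
    ∃ w : ℤ → X, (∀ n, w (n + 1) = A n (w n) + d n) ∧ MemXB B.toBanachSeqSpace w ∧
      normXB B.toBanachSeqSpace w ≤ (∑' i, greenBound C lam i) * normXB B.toBanachSeqSpace d := by
  have hbdd := B.norm_le_normXB_div hd
  obtain ⟨hmem, hnorm⟩ := B.mem_conv_and_norm_conv_le (greenBound_nonneg hD.C_pos.le lam)
    (summable_greenBound C hD.lam_pos) hd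
  have hle : ∀ n, |‖greenSolution E P d n‖| ≤ |∑' i, greenBound C lam i * ‖d (n - i)‖| :=
    fun n => by
      rw [abs_norm]
      exact (hD.norm_greenSolution_le hbdd n).trans (le_abs_self _)
  have hwmem := B.mono_mem _ _ hmem hle
  exact ⟨greenSolution E P d, hD.greenSolution_succ hbdd, hwmem,
    (B.mono_norm _ _ hwmem hmem hle).trans hnorm⟩

lemma eq_of_memXB_sub (hD : IsDichotomy A E P C lam) (hA : ∀ m, Function.Injective (A m))
    (B : AdmissibleSeqSpace) {x x' y : ℤ → X} (hx : ∀ n, x (n + 1) = A n (x n))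
    (hx' : ∀ n, x' (n + 1) = A n (x' n)) (hxy : MemXB B.toBanachSeqSpace (x - y))
    (hx'y : MemXB B.toBanachSeqSpace (x' - y)) : x = x' := by
  have hsol : ∀ m, (x - x') (m + 1) = A m ((x - x') m) := fun m => by simp [hx, hx']
  have hbdd : ∀ n, ‖(x - x') n‖ ≤
      normXB B.toBanachSeqSpace (x - y) / B.unitNorm +
        normXB B.toBanachSeqSpace (x' - y) / B.unitNorm := fun n =>
    calc ‖(x - x') n‖ = ‖(x - y) n - (x' - y) n‖ := by simp
      _ ≤ _ := (norm_sub_le _ _).trans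
        (add_le_add (B.norm_le_normXB_div hxy n) (B.norm_le_normXB_div hx'y n))
  exact sub_eq_zero.1 (hD.eq_zero_of_bounded_solution hA hsol hbdd)

end IsDichotomy

end Dichotomy

theorem linear_B_lipschitz_shadowing_general {X : Type*} [NormedAddCommGroup X]
    [NormedSpace ℝ X] [CompleteSpace X]
    (B : AdmissibleSeqSpace)
    (A : ℤ → X ≃L[ℝ] X)
    (hED : ExpDichotomy fun m => (A m : X →L[ℝ] X)) :
    (∃ L > (0 : ℝ), ∀ ε > (0 : ℝ), ∀ y : ℤ → X,
      MemXB B.toBanachSeqSpace (fun n => y (n + 1) - A n (y n)) →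
      normXB B.toBanachSeqSpace (fun n => y (n + 1) - A n (y n)) ≤ L * ε →
      ∃ x : ℤ → X, (∀ n, x (n + 1) = A n (x n)) ∧
        MemXB B.toBanachSeqSpace (x - y) ∧ normXB B.toBanachSeqSpace (x - y) ≤ ε) ∧
    (∀ ε > (0 : ℝ), ∀ y x x' : ℤ → X,
      (∀ n, x (n + 1) = A n (x n)) → (∀ n, x' (n + 1) = A n (x' n)) →
      MemXB B.toBanachSeqSpace (x - y) → normXB B.toBanachSeqSpace (x - y) ≤ ε →
      MemXB B.toBanachSeqSpace (x' - y) → normXB B.toBanachSeqSpace (x' - y) ≤ ε →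
      x = x') := by
  obtain ⟨E, P, C, lam, hD⟩ := hED.exists_isDichotomy
  have hT := tsum_greenBound_pos hD.C_pos hD.lam_pos
  refine ⟨⟨(∑' i, greenBound C lam i)⁻¹, inv_pos.2 hT, fun ε _ y hd hdε => ?_⟩,
    fun ε _ y x x' hx hx' hxm _ hx'm _ => ?_⟩
  · obtain ⟨w, hw, hwm, hwε⟩ := hD.exists_solution_memXB B hd
    have hxy : (fun n => ‖(y - w - y) n‖) = fun n => ‖w n‖ := by simp
    refine ⟨y - w, fun n => ?_, by simpa [MemXB, hxy] using hwm, ?_⟩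
    · simp only [Pi.sub_apply, hw n, map_sub, ContinuousLinearEquiv.coe_coe]
      abel
    · calc normXB B.toBanachSeqSpace (y - w - y) = normXB B.toBanachSeqSpace w := by
            simp only [normXB, hxy]
        _ ≤ (∑' i, greenBound C lam i) * ((∑' i, greenBound C lam i)⁻¹ * ε) :=
          hwε.trans (mul_le_mul_of_nonneg_left hdε hT.le)
        _ = ε := by field_simp
  · exact hD.eq_of_memXB_sub (fun m => (A m).injective) B hx hx' hxm hx'm

/-- `B`-Lipschitz shadowing for linear systems with an exponential dichotomy, together with
uniqueness of the shadowing trajectory for every `ε > 0`. -/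
theorem linear_B_lipschitz_shadowing {X : Type*} [NormedAddCommGroup X]
    [NormedSpace ℝ X] [CompleteSpace X]
    (B : AdmissibleSeqSpace)
    (A : ℤ → X ≃L[ℝ] X) (M : ℝ) (hM : ∀ m, ‖(A m : X →L[ℝ] X)‖ ≤ M)
    (hED : ExpDichotomy fun m => (A m : X →L[ℝ] X)) :
    (∃ L > (0 : ℝ), ∀ ε > (0 : ℝ), ∀ y : ℤ → X,
      MemXB B.toBanachSeqSpace (fun n => y (n + 1) - A n (y n)) →
      normXB B.toBanachSeqSpace (fun n => y (n + 1) - A n (y n)) ≤ L * ε →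
      ∃ x : ℤ → X, (∀ n, x (n + 1) = A n (x n)) ∧
        MemXB B.toBanachSeqSpace (x - y) ∧ normXB B.toBanachSeqSpace (x - y) ≤ ε) ∧
    (∀ ε > (0 : ℝ), ∀ y x x' : ℤ → X,
      (∀ n, x (n + 1) = A n (x n)) → (∀ n, x' (n + 1) = A n (x' n)) →
      MemXB B.toBanachSeqSpace (x - y) → normXB B.toBanachSeqSpace (x - y) ≤ ε →
      MemXB B.toBanachSeqSpace (x' - y) → normXB B.toBanachSeqSpace (x' - y) ≤ ε →
      x = x') :=
  linear_B_lipschitz_shadowing_general B A hED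
end

section
/- Let $(A_m)_{m\in\mathbb{Z}}$ be a uniformly bounded sequence of invertible bounded operators on a Banach space $X$ admitting an exponential dichotomy, and let $1\le p<\infty$. For each sequence $(y_n)_{n\in\mathbb{Z}}\subset X$ with $\sum_{n\in\mathbb{Z}}\|y_{n+1}-A_ny_n\|^p<\infty$, there exists a unique sequence $(x_n)_{n\in\mathbb{Z}}$ satisfying $x_{n+1}=A_nx_n$ for all $n$ and $\sum_{n\in\mathbb{Z}}\|x_n-y_n\|^p<\infty$. -/
open Filter Topology
open scoped ENNReal

namespace ENNReal

variable {p : ℝ}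

theorem tsum_mul_rpow_le {ι : Type*} (hp : 1 ≤ p) (w u : ι → ℝ≥0∞) :
    (∑' k, w k * u k) ^ p ≤ (∑' k, w k) ^ (p - 1) * ∑' k, w k * u k ^ p := by
  have hp0 : 0 < p := zero_lt_one.trans_le hp
  have holder : ∑' k, w k * u k ≤ (∑' k, w k) ^ (1 - p⁻¹) * (∑' k, w k * u k ^ p) ^ p⁻¹ := by
    rw [ENNReal.tsum_eq_iSup_sum]
    refine iSup_le fun s => (inner_le_weight_mul_Lp_of_nonneg s hp w u).trans ?_
    gcongr
    · exact sub_nonneg.2 (inv_le_one_of_one_le₀ hp)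
    all_goals exact ENNReal.sum_le_tsum s
  calc (∑' k, w k * u k) ^ p
      ≤ ((∑' k, w k) ^ (1 - p⁻¹) * (∑' k, w k * u k ^ p) ^ p⁻¹) ^ p := by gcongr
    _ = (∑' k, w k) ^ (p - 1) * ∑' k, w k * u k ^ p := by
      rw [ENNReal.mul_rpow_of_nonneg _ _ hp0.le, ← ENNReal.rpow_mul, ← ENNReal.rpow_mul,
        inv_mul_cancel₀ hp0.ne', ENNReal.rpow_one, sub_mul, one_mul, inv_mul_cancel₀ hp0.ne']

/-- Young's convolution inequality `‖w ⋆ u‖_p ≤ ‖w‖_1 ‖u‖_p`, raised to the power `p`. -/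
theorem tsum_conv_rpow_le {G : Type*} [AddGroup G] (hp : 1 ≤ p) (w u : G → ℝ≥0∞) :
    ∑' n, (∑' k, w (n - k) * u k) ^ p ≤ (∑' j, w j) ^ p * ∑' k, u k ^ p := by
  set S := ∑' j, w j
  have row (n : G) : ∑' k, w (n - k) = S := (Equiv.subLeft n).tsum_eq w
  have col (k : G) : ∑' n, w (n - k) = S := (Equiv.subRight k).tsum_eq w
  calc ∑' n, (∑' k, w (n - k) * u k) ^ p
      ≤ ∑' n, S ^ (p - 1) * ∑' k, w (n - k) * u k ^ p :=
        ENNReal.tsum_le_tsum fun n => row n ▸ tsum_mul_rpow_le hp (fun k => w (n - k)) u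
    _ = S ^ (p - 1) * ∑' k, (∑' n, w (n - k)) * u k ^ p := by
        rw [ENNReal.tsum_mul_left, ENNReal.tsum_comm]
        simp only [ENNReal.tsum_mul_right]
    _ = S ^ p * ∑' k, u k ^ p := by
        simp only [col, ENNReal.tsum_mul_left, ← mul_assoc]
        nth_rw 2 [← ENNReal.rpow_one S]
        rw [← ENNReal.rpow_add_of_nonneg _ _ (by linarith) zero_le_one, sub_add_cancel]

end ENNReal

theorem summable_conv_rpow {G : Type*} [AddGroup G] {a b : G → ℝ} {p : ℝ} (hp : 1 ≤ p)
    (ha0 : 0 ≤ a) (ha : Summable a) (hb0 : 0 ≤ b) (hb : Summable fun k => b k ^ p) :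
    (∀ n, Summable fun k => a (n - k) * b k) ∧
      Summable fun n => (∑' k, a (n - k) * b k) ^ p := by
  have hp0 : 0 < p := zero_lt_one.trans_le hp
  set F : G → ℝ≥0∞ := fun n => ∑' k, ENNReal.ofReal (a (n - k)) * ENNReal.ofReal (b k)
  have hF : ∑' n, F n ^ p ≠ ⊤ := by
    refine ((ENNReal.tsum_conv_rpow_le hp (fun j => ENNReal.ofReal (a j))
      fun k => ENNReal.ofReal (b k)).trans_lt ?_).ne
    rw [← ENNReal.ofReal_tsum_of_nonneg ha0 ha]
    simp only [ENNReal.ofReal_rpow_of_nonneg (hb0 _) hp0.le]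
    rw [← ENNReal.ofReal_tsum_of_nonneg (fun k => Real.rpow_nonneg (hb0 k) p) hb]
    exact ENNReal.mul_lt_top (ENNReal.rpow_lt_top_of_nonneg hp0.le ENNReal.ofReal_ne_top)
      ENNReal.ofReal_lt_top
  have hrow (n : G) : Summable fun k => a (n - k) * b k := by
    have hFn : F n ≠ ⊤ := by
      have := (ENNReal.le_tsum n).trans_lt hF.lt_top
      simpa [ENNReal.rpow_eq_top_iff, hp0, hp0.not_gt] using this.ne
    simpa [ENNReal.toReal_mul, ENNReal.toReal_ofReal (ha0 _), ENNReal.toReal_ofReal (hb0 _)]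
      using ENNReal.summable_toReal hFn
  refine ⟨hrow, (ENNReal.summable_toReal hF).congr fun n => ?_⟩
  have hnn (k : G) : 0 ≤ a (n - k) * b k := mul_nonneg (ha0 _) (hb0 _)
  simp only [F, ← ENNReal.ofReal_mul (ha0 _), ← ENNReal.ofReal_tsum_of_nonneg hnn (hrow n),
    ← ENNReal.toReal_rpow, ENNReal.toReal_ofReal (tsum_nonneg hnn)]

theorem summable_norm_tsum_rpow_of_norm_le_conv {G X : Type*} [AddGroup G]
    [NormedAddCommGroup X] [CompleteSpace X] {f : G → G → X} {a b : G → ℝ} {p : ℝ}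
    (hp : 1 ≤ p) (ha0 : 0 ≤ a) (ha : Summable a) (hb0 : 0 ≤ b)
    (hb : Summable fun k => b k ^ p) (hf : ∀ n k, ‖f n k‖ ≤ a (n - k) * b k) :
    (∀ n, Summable (f n)) ∧ Summable fun n => ‖∑' k, f n k‖ ^ p := by
  obtain ⟨hrow, hconv⟩ := summable_conv_rpow hp ha0 ha hb0 hb
  have hsum (n : G) : Summable (f n) := .of_norm_bounded (hrow n) (hf n)
  refine ⟨hsum, hconv.of_nonneg_of_le (fun n => by positivity) fun n => ?_⟩
  gcongr
  exact tsum_of_norm_bounded (hrow n).hasSum (hf n)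

theorem summable_exp_neg_mul_abs_int {lam : ℝ} (hlam : 0 < lam) :
    Summable fun j : ℤ => Real.exp (-lam * |(j : ℝ)|) := by
  have h : Summable fun n : ℕ => Real.exp (-lam) ^ n :=
    summable_geometric_of_lt_one (Real.exp_nonneg _) (Real.exp_lt_one_iff.2 (by linarith))
  refine .of_nat_of_neg ?_ ?_ <;>
    simpa only [Int.cast_neg, abs_neg, Int.cast_natCast, Nat.abs_cast, mul_comm (-lam),
      Real.exp_nat_mul] using h

theorem tendsto_cofinite_zero_of_summable_norm_rpow {ι X : Type*} [NormedAddCommGroup X]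
    {f : ι → X} {p : ℝ} (hp : 0 < p) (hf : Summable fun n => ‖f n‖ ^ p) :
    Tendsto f cofinite (𝓝 0) := by
  rw [tendsto_zero_iff_norm_tendsto_zero]
  have h := ((Real.continuousAt_rpow_const 0 p⁻¹ (Or.inr (inv_pos.2 hp).le)).tendsto.comp
    hf.tendsto_cofinite_zero)
  simpa [Function.comp_def, Real.rpow_rpow_inv (norm_nonneg _) hp.ne', Real.zero_rpow
    (inv_pos.2 hp).ne'] using h

structure DichotomyData {X : Type*} [NormedAddCommGroup X] [NormedSpace ℝ X]
    (A : ℤ → X →L[ℝ] X) where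
  E : ℤ → ℤ → X →L[ℝ] X
  P : ℤ → X →L[ℝ] X
  C : ℝ
  lam : ℝ
  C_nonneg : 0 ≤ C
  lam_pos : 0 < lam
  E_self : ∀ n, E n n = ContinuousLinearMap.id ℝ X
  E_succ : ∀ m n, E (m + 1) n = (A m).comp (E m n)
  P_comm : ∀ m, (P (m + 1)).comp (A m) = (A m).comp (P m)
  norm_stable_le : ∀ m n, n ≤ m → ‖(E m n).comp (P n)‖ ≤ C * Real.exp (-lam * ((m - n : ℤ) : ℝ))
  norm_unstable_le : ∀ m n, m ≤ n →
    ‖(E m n).comp (ContinuousLinearMap.id ℝ X - P n)‖ ≤ C * Real.exp (-lam * ((n - m : ℤ) : ℝ))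

theorem ExpDichotomy.nonempty_dichotomyData {X : Type*} [NormedAddCommGroup X]
    [NormedSpace ℝ X] {A : ℤ → X →L[ℝ] X} (h : ExpDichotomy A) : Nonempty (DichotomyData A) :=
  let ⟨E, P, C, lam, hC, hlam, hself, hsucc, _, hcomm, hs, hu⟩ := h
  ⟨⟨E, P, C, lam, hC.le, hlam, hself, hsucc, hcomm, hs, hu⟩⟩

namespace DichotomyData

variable {X : Type*} [NormedAddCommGroup X] [NormedSpace ℝ X] {A : ℤ → X →L[ℝ] X}
  (D : DichotomyData A)

theorem E_apply_of_trajectory (hA : ∀ m, Function.Injective (A m)) {w : ℤ → X}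
    (hw : ∀ n, w (n + 1) = A n (w n)) (m n : ℤ) : D.E m n (w n) = w m := by
  induction m using Int.inductionOn' (b := n) with
  | zero => simp [D.E_self]
  | succ k _ ih => rw [D.E_succ, ContinuousLinearMap.comp_apply, ih, hw]
  | pred k _ ih =>
    apply hA (k - 1)
    rw [← ContinuousLinearMap.comp_apply, ← D.E_succ, ← hw, sub_add_cancel, ih]

theorem P_E_apply (hA : ∀ m, Function.Injective (A m)) (m n : ℤ) (v : X) :
    D.P m (D.E m n v) = D.E m n (D.P n v) := by
  have hE (m : ℤ) : D.E (m + 1) n v = A m (D.E m n v) := by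
    rw [D.E_succ, ContinuousLinearMap.comp_apply]
  have hPE (m : ℤ) : D.P (m + 1) (D.E (m + 1) n v) = A m (D.P m (D.E m n v)) := by
    rw [hE, ← ContinuousLinearMap.comp_apply, D.P_comm, ContinuousLinearMap.comp_apply]
  rw [← D.E_apply_of_trajectory hA (w := fun m => D.P m (D.E m n v)) hPE m n, D.E_self,
    ContinuousLinearMap.id_apply]

theorem norm_E_comp_P_le {m n : ℤ} (h : n ≤ m) : ‖(D.E m n).comp (D.P n)‖ ≤ D.C := by
  refine (D.norm_stable_le m n h).trans (mul_le_of_le_one_right D.C_nonneg ?_)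
  exact Real.exp_le_one_iff.2 (mul_nonpos_of_nonpos_of_nonneg (neg_nonpos.2 D.lam_pos.le)
    (by exact_mod_cast sub_nonneg.2 h))

theorem norm_E_comp_sub_P_le {m n : ℤ} (h : m ≤ n) :
    ‖(D.E m n).comp (ContinuousLinearMap.id ℝ X - D.P n)‖ ≤ D.C := by
  refine (D.norm_unstable_le m n h).trans (mul_le_of_le_one_right D.C_nonneg ?_)
  exact Real.exp_le_one_iff.2 (mul_nonpos_of_nonpos_of_nonneg (neg_nonpos.2 D.lam_pos.le)
    (by exact_mod_cast sub_nonneg.2 h))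

/-- A trajectory vanishing at `±∞` has zero stable part (by looking back to `-∞`)
and zero unstable part (by looking forward to `+∞`). -/
theorem eq_zero_of_tendsto (D : DichotomyData A) (hA : ∀ m, Function.Injective (A m))
    {w : ℤ → X} (hw : ∀ n, w (n + 1) = A n (w n)) (h : Tendsto w cofinite (𝓝 0)) : w = 0 := by
  rw [Int.cofinite_eq, tendsto_sup] at h
  have hC {l : Filter ℤ} (hl : Tendsto w l (𝓝 0)) :
      Tendsto (fun m => D.C * ‖w m‖) l (𝓝 0) := by
    simpa using (tendsto_norm_zero.comp hl).const_mul D.C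
  funext n
  have hstable : ‖D.P n (w n)‖ ≤ 0 := by
    refine ge_of_tendsto (hC h.1) (eventually_atBot.2 ⟨n, fun m hm => ?_⟩)
    rw [← D.E_apply_of_trajectory hA hw n m, D.P_E_apply hA, ← ContinuousLinearMap.comp_apply]
    exact ((D.E n m).comp (D.P m)).le_of_opNorm_le (D.norm_E_comp_P_le hm) _
  have hunstable : ‖w n - D.P n (w n)‖ ≤ 0 := by
    refine ge_of_tendsto (hC h.2) (eventually_atTop.2 ⟨n, fun m hm => ?_⟩)
    rw [← D.E_apply_of_trajectory hA hw n m, D.P_E_apply hA, ← map_sub]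
    exact ((D.E n m).comp _).le_of_opNorm_le (D.norm_E_comp_sub_P_le hm) _
  rw [norm_le_zero_iff.1 hstable, sub_zero] at hunstable
  exact norm_le_zero_iff.1 hunstable

def green (n j : ℤ) : X →L[ℝ] X :=
  if j ≤ n then (D.E n j).comp (D.P j)
  else -(D.E n j).comp (ContinuousLinearMap.id ℝ X - D.P j)

theorem norm_green_le (n j : ℤ) :
    ‖D.green n j‖ ≤ D.C * Real.exp (-D.lam * |((n - j : ℤ) : ℝ)|) := by
  unfold green
  split_ifs with h
  · rw [abs_of_nonneg (by exact_mod_cast sub_nonneg.2 h)]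
    exact D.norm_stable_le n j h
  · rw [norm_neg, abs_of_nonpos (by exact_mod_cast sub_nonpos.2 (not_le.1 h).le), ← Int.cast_neg,
      neg_sub]
    exact D.norm_unstable_le n j (not_le.1 h).le

theorem green_succ_of_ne {n j : ℤ} (h : j ≠ n + 1) :
    D.green (n + 1) j = (A n).comp (D.green n j) := by
  unfold green
  rcases lt_or_gt_of_ne h with h | h
  · rw [if_pos (by omega), if_pos (by omega), D.E_succ, ContinuousLinearMap.comp_assoc]
  · rw [if_neg (by omega), if_neg (by omega), D.E_succ, ContinuousLinearMap.comp_neg,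
      ContinuousLinearMap.comp_assoc]

theorem green_succ_self (n : ℤ) :
    D.green (n + 1) (n + 1) = (A n).comp (D.green n (n + 1)) + ContinuousLinearMap.id ℝ X := by
  unfold green
  rw [if_pos le_rfl, if_neg (by omega), ContinuousLinearMap.comp_neg,
    ← ContinuousLinearMap.comp_assoc, ← D.E_succ, D.E_self]
  simp

noncomputable def greenSum (z : ℤ → X) (n : ℤ) : X :=
  ∑' k, D.green n (k + 1) (z k)

variable [CompleteSpace X] {p : ℝ} {z : ℤ → X}

theorem summable_green_and_summable_norm_greenSum_rpow (hp : 1 ≤ p)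
    (hz : Summable fun k => ‖z k‖ ^ p) :
    (∀ n, Summable fun k => D.green n (k + 1) (z k)) ∧
      Summable fun n => ‖D.greenSum z n‖ ^ p := by
  have hexp : Summable fun j : ℤ => Real.exp (-D.lam * |((j - 1 : ℤ) : ℝ)|) :=
    (summable_exp_neg_mul_abs_int D.lam_pos).comp_injective (sub_left_injective (b := 1))
  refine summable_norm_tsum_rpow_of_norm_le_conv hp
    (fun j => mul_nonneg D.C_nonneg (Real.exp_nonneg _)) (hexp.mul_left D.C)
    (fun k => norm_nonneg (z k)) hz fun n k => ?_
  refine ((D.green n (k + 1)).le_opNorm (z k)).trans ?_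
  gcongr
  simpa only [sub_sub] using D.norm_green_le n (k + 1)

theorem greenSum_succ (hp : 1 ≤ p) (hz : Summable fun k => ‖z k‖ ^ p) (n : ℤ) :
    D.greenSum z (n + 1) = A n (D.greenSum z n) + z n := by
  have hsum := (D.summable_green_and_summable_norm_greenSum_rpow hp hz).1 n
  have hterm (k : ℤ) : D.green (n + 1) (k + 1) (z k) =
      A n (D.green n (k + 1) (z k)) + if k = n then z k else 0 := by
    split_ifs with h
    · rw [h, D.green_succ_self]; rfl
    · rw [D.green_succ_of_ne (by omega), add_zero]; rfl
  rw [greenSum, tsum_congr hterm, Summable.tsum_add ((A n).summable hsum)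
    ((hasSum_ite_eq n (z n)).summable.congr fun k => by split_ifs with h <;> simp [h]),
    ← (A n).map_tsum hsum, greenSum]
  congr 1
  simp

end DichotomyData

theorem linear_lp_shadowing_general {X : Type*} [NormedAddCommGroup X]
    [NormedSpace ℝ X] [CompleteSpace X]
    (A : ℤ → X ≃L[ℝ] X)
    (hED : ExpDichotomy fun m => (A m : X →L[ℝ] X))
    (p : ℝ) (hp : 1 ≤ p) (y : ℤ → X)
    (hy : Summable fun n : ℤ => ‖y (n + 1) - A n (y n)‖ ^ p) :
    ∃! x : ℤ → X, (∀ n, x (n + 1) = A n (x n)) ∧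
      Summable fun n : ℤ => ‖x n - y n‖ ^ p := by
  obtain ⟨D⟩ := hED.nonempty_dichotomyData
  set u := D.greenSum fun n => y (n + 1) - A n (y n)
  have hu_succ (n : ℤ) : u (n + 1) = A n (u n) + (y (n + 1) - A n (y n)) :=
    D.greenSum_succ hp hy n
  have hu : Summable fun n => ‖u n‖ ^ p :=
    (D.summable_green_and_summable_norm_greenSum_rpow hp hy).2
  refine ⟨y - u, ⟨fun n => ?_, by simpa using hu⟩, fun x ⟨hx, hxy⟩ => ?_⟩
  · simp only [Pi.sub_apply, hu_succ, map_sub]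
    abel
  have hw (n : ℤ) : (x - (y - u)) (n + 1) = A n ((x - (y - u)) n) := by
    simp only [Pi.sub_apply, hx, hu_succ, map_sub]
    abel
  have hlim : Tendsto (x - (y - u)) cofinite (𝓝 0) := by
    have h := (tendsto_cofinite_zero_of_summable_norm_rpow (by linarith) hxy).add
      (tendsto_cofinite_zero_of_summable_norm_rpow (by linarith) hu)
    rw [add_zero] at h
    exact h.congr fun n => sub_add _ _ _
  exact sub_eq_zero.1 (D.eq_zero_of_tendsto (fun m => (A m).injective) hw hlim)

/-- `ℓ^p`-shadowing for linear systems: if the defect of `(y n)` is `p`-summable, there is a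
unique true trajectory of the linear system at `p`-summable distance from `(y n)`. -/
theorem linear_lp_shadowing {X : Type*} [NormedAddCommGroup X]
    [NormedSpace ℝ X] [CompleteSpace X]
    (A : ℤ → X ≃L[ℝ] X) (M : ℝ) (hM : ∀ m, ‖(A m : X →L[ℝ] X)‖ ≤ M)
    (hED : ExpDichotomy fun m => (A m : X →L[ℝ] X))
    (p : ℝ) (hp : 1 ≤ p) (y : ℤ → X)
    (hy : Summable fun n : ℤ => ‖y (n + 1) - A n (y n)‖ ^ p) :
    ∃! x : ℤ → X, (∀ n, x (n + 1) = A n (x n)) ∧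
      Summable fun n : ℤ => ‖x n - y n‖ ^ p :=
  linear_lp_shadowing_general A hED p hp y hy
end

section
/- In the setting of the nonautonomous Grobman–Hartman theorem, the conjugating maps $h_m$ satisfying $h_{m+1}\circ G_m=A_m\circ h_m$ and $\sup_x\|h_m(x)-x\|\le\varepsilon$ are injective: if $h_m(y)=h_m(z)$ for some $y,z\in X$ and some $m$, then $y=z$. -/
open Filter Topology

section Orbit

variable {X : Type*}

theorem exists_orbit (e : ℤ → X ≃ X) (m : ℤ) (x : X) :
    ∃ Y : ℤ → X, Y m = x ∧ ∀ n, Y (n + 1) = e n (Y n) := by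
  let Y : ℤ → X := fun n =>
    n.inductionOn' m x (fun k _ y => e k y) (fun k _ y => (e (k - 1)).symm y)
  refine ⟨Y, Int.inductionOn'_self, fun n => ?_⟩
  rcases le_or_gt m n with hmn | hnm
  · exact Int.inductionOn'_add_one hmn
  · have hpred : Y (n + 1 - 1) = (e n).symm (Y (n + 1)) := by
      simpa using Int.inductionOn'_sub_one (z := n + 1) (b := m) (motive := fun _ => X)
        (zero := x) (succ := fun k _ y => e k y) (pred := fun k _ y => (e (k - 1)).symm y)
        (by omega)
    rw [add_sub_cancel_right] at hpred
    rw [hpred, Equiv.apply_symm_apply]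

theorem orbit_eq_of_eq {e : ℤ → X ≃ X} {Y Z : ℤ → X}
    (hY : ∀ n, Y (n + 1) = e n (Y n)) (hZ : ∀ n, Z (n + 1) = e n (Z n))
    {n₀ : ℤ} (h : Y n₀ = Z n₀) (n : ℤ) : Y n = Z n := by
  rcases le_total n₀ n with hle | hle
  · induction n, hle using Int.leInduction with
    | base => exact h
    | succ k _ ih => rw [hY, hZ, ih]
  · induction n, hle using Int.leInductionDown with
    | base => exact h
    | pred k _ ih =>
      apply (e (k - 1)).injective
      rw [← hY, ← hZ, sub_add_cancel, ih]

end Orbit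

section RankOne

variable {X : Type*} [NormedAddCommGroup X] [NormedSpace ℝ X]

theorem exists_dual_eq_one_ne_zero {w u : X} (hw : w ≠ 0) (hu : u ≠ 0) :
    ∃ f : StrongDual ℝ X, f w = 1 ∧ ‖f‖ * ‖w‖ ≤ 2 ∧ f u ≠ 0 := by
  have hw_pos : 0 < ‖w‖ := norm_pos_iff.mpr hw
  obtain ⟨f₀, hf₀_norm, hf₀w⟩ := exists_dual_vector ℝ w (norm_ne_zero_iff.mpr hw)
  obtain ⟨f₁, hf₁_norm, hf₁u⟩ := exists_dual_vector ℝ u (norm_ne_zero_iff.mpr hu)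
  simp only [RCLike.ofReal_real_eq_id, id] at hf₀w hf₁u
  -- `g` is `f₀` if `f₀ u ≠ 0`, otherwise `f₀ + f₁ / 3`.
  obtain ⟨g, hgw, hg_norm, hgu⟩ :
      ∃ g : StrongDual ℝ X, 0 < g w ∧ ‖g‖ * ‖w‖ ≤ 2 * g w ∧ g u ≠ 0 := by
    by_cases h₀ : f₀ u = 0
    · have hf₁w : |f₁ w| ≤ ‖w‖ := by simpa [hf₁_norm] using f₁.le_opNorm w
      have hg_norm : ‖f₀ + (3⁻¹ : ℝ) • f₁‖ ≤ 1 + 3⁻¹ := by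
        calc ‖f₀ + (3⁻¹ : ℝ) • f₁‖ ≤ ‖f₀‖ + ‖(3⁻¹ : ℝ) • f₁‖ := norm_add_le _ _
          _ = 1 + 3⁻¹ := by rw [norm_smul, hf₀_norm, hf₁_norm]; norm_num
      have hgw : (f₀ + (3⁻¹ : ℝ) • f₁) w = ‖w‖ + 3⁻¹ * f₁ w := by simp [hf₀w]
      refine ⟨f₀ + (3⁻¹ : ℝ) • f₁, ?_, ?_, ?_⟩
      · rw [hgw]; linarith [neg_abs_le (f₁ w)]
      · rw [hgw]
        nlinarith [mul_le_mul_of_nonneg_right hg_norm hw_pos.le, neg_abs_le (f₁ w)]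
      · simp [h₀, hf₁u, hu]
    · exact ⟨f₀, by simpa [hf₀w] using hw_pos, by rw [hf₀_norm, hf₀w]; linarith, h₀⟩
  refine ⟨(g w)⁻¹ • g, by simp [hgw.ne'], ?_, by simp [hgw.ne', hgu]⟩
  rw [norm_smul, norm_inv, Real.norm_of_nonneg hgw.le, mul_assoc, inv_mul_le_iff₀ hgw]
  linarith

theorem exists_injective_map_eq_norm_sub_le (A : X ≃L[ℝ] X) {w w' : X} (hw : w ≠ 0)
    (hw' : w' ≠ 0) :
    ∃ B : X →L[ℝ] X, Function.Injective B ∧ B w = w' ∧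
      ‖B - (A : X →L[ℝ] X)‖ * ‖w‖ ≤ 2 * ‖w' - A w‖ := by
  have hu : A.symm w' ≠ 0 := by simpa using hw'
  obtain ⟨f, hfw, hf_norm, hfu⟩ := exists_dual_eq_one_ne_zero hw hu
  set r := w' - A w
  have hB : ∀ x, ((A : X →L[ℝ] X) + f.smulRight r) x = A x + f x • r := fun x => rfl
  refine ⟨A + f.smulRight r, ?_, by simp [hB, hfw, r], ?_⟩
  · -- `B x = 0` forces `x = f x • (w - A⁻¹ w')`, and then `f x * f (A⁻¹ w') = 0`.
    refine (injective_iff_map_eq_zero _).mpr fun x hx => ?_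
    have hx' : x = f x • (w - A.symm w') := by
      have := congrArg A.symm ((hB x).symm.trans hx)
      simp only [map_add, map_smul, ContinuousLinearEquiv.symm_apply_apply, map_zero, r,
        map_sub] at this
      linear_combination (norm := module) this
    have hfx : f x = 0 := by
      have := congrArg f hx'
      rw [map_smul, map_sub, hfw, smul_eq_mul] at this
      have : f x * f (A.symm w') = 0 := by linear_combination this
      exact (mul_eq_zero.mp this).resolve_right hfu
    rw [hx', hfx, zero_smul]
  · rw [add_sub_cancel_left, ContinuousLinearMap.norm_smulRight_apply, mul_right_comm]
    exact mul_le_mul_of_nonneg_right hf_norm (norm_nonneg r)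

end RankOne

theorem eq_zero_of_norm_le_mul_exp {X : Type*} [NormedAddCommGroup X] {v : X} {a lam : ℝ}
    (hlam : 0 < lam) (h : ∀ N : ℕ, ‖v‖ ≤ a * Real.exp (-lam * N)) : v = 0 := by
  have hlim : Tendsto (fun N : ℕ => a * Real.exp (-lam * N)) atTop (𝓝 0) := by
    simpa using ((Real.tendsto_exp_atBot.comp
      (tendsto_natCast_atTop_atTop.const_mul_atTop_of_neg (neg_neg_of_pos hlam))).const_mul a)
  exact norm_le_zero_iff.mp (ge_of_tendsto' hlim h)

section Dichotomy

variable {X : Type*} [NormedAddCommGroup X] [NormedSpace ℝ X]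
  {B : ℤ → X →L[ℝ] X} {E : ℤ → ℤ → X →L[ℝ] X}

theorem evolution_comp_apply (hE0 : ∀ n, E n n = ContinuousLinearMap.id ℝ X)
    (hE : ∀ m n, E (m + 1) n = (B m).comp (E m n)) {m k : ℤ} (hmk : m ≤ k) (n : ℤ) (x : X) :
    E k m (E m n x) = E k n x := by
  induction k, hmk using Int.leInduction with
  | base => simp [hE0]
  | succ k _ ih => simp [hE, ih]

theorem evolution_injective (hE0 : ∀ n, E n n = ContinuousLinearMap.id ℝ X)
    (hE : ∀ m n, E (m + 1) n = (B m).comp (E m n)) (hB : ∀ n, Function.Injective (B n))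
    {n k : ℤ} (hnk : n ≤ k) : Function.Injective (E k n) := by
  induction k, hnk using Int.leInduction with
  | base => simpa [hE0] using Function.injective_id
  | succ k _ ih =>
    rw [hE, ContinuousLinearMap.coe_comp]
    exact (hB k).comp ih

-- For `n ≤ k` the dichotomy only makes `E n k` a right inverse of `E k n`.
theorem evolution_leftInverse (hE0 : ∀ n, E n n = ContinuousLinearMap.id ℝ X)
    (hE : ∀ m n, E (m + 1) n = (B m).comp (E m n)) (hB : ∀ n, Function.Injective (B n))
    {n k : ℤ} (hnk : n ≤ k) (x : X) : E n k (E k n x) = x := by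
  apply evolution_injective hE0 hE hB hnk
  rw [evolution_comp_apply hE0 hE hnk, hE0]
  rfl

theorem orbit_eq_evolution_apply (hE0 : ∀ n, E n n = ContinuousLinearMap.id ℝ X)
    (hE : ∀ m n, E (m + 1) n = (B m).comp (E m n)) (hB : ∀ n, Function.Injective (B n))
    {w : ℤ → X} (hw : ∀ n, w (n + 1) = B n (w n)) (a b : ℤ) : w a = E a b (w b) := by
  have forward : ∀ {n k}, n ≤ k → w k = E k n (w n) := by
    intro n k hnk
    induction k, hnk using Int.leInduction with
    | base => simp [hE0]
    | succ k _ ih => simp [hw, hE, ih]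
  rcases le_total b a with hba | hab
  · exact forward hba
  · rw [forward hab, evolution_leftInverse hE0 hE hB hab]

theorem proj_evolution_apply (hE0 : ∀ n, E n n = ContinuousLinearMap.id ℝ X)
    (hE : ∀ m n, E (m + 1) n = (B m).comp (E m n)) {P : ℤ → X →L[ℝ] X}
    (hP : ∀ m, (P (m + 1)).comp (B m) = (B m).comp (P m)) {n k : ℤ} (hnk : n ≤ k) (x : X) :
    P k (E k n x) = E k n (P n x) := by
  induction k, hnk using Int.leInduction with
  | base => simp [hE0]
  | succ k _ ih =>
    simpa [hE, ih] using congrArg (fun T : X →L[ℝ] X => T (E k n x)) (hP k)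

theorem ExpDichotomy.eq_zero_of_bounded_orbit (hED : ExpDichotomy B)
    (hB : ∀ n, Function.Injective (B n)) {w : ℤ → X} (hw : ∀ n, w (n + 1) = B n (w n))
    {K : ℝ} (hK : ∀ n, ‖w n‖ ≤ K) : w = 0 := by
  obtain ⟨E, P, C, lam, hC, hlam, hE0, hE, -, hP, hstable, hunstable⟩ := hED
  have orbit := orbit_eq_evolution_apply hE0 hE hB hw
  have decay : ∀ (T : X →L[ℝ] X) (k : ℤ) (N : ℕ), ‖T‖ ≤ C * Real.exp (-lam * N) →
      ‖T (w k)‖ ≤ C * K * Real.exp (-lam * N) := fun T k N hT =>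
    calc ‖T (w k)‖ ≤ C * Real.exp (-lam * N) * ‖w k‖ := T.le_of_opNorm_le hT _
      _ ≤ C * Real.exp (-lam * N) * K := by gcongr; exact hK k
      _ = C * K * Real.exp (-lam * N) := by ring
  have stable_part : ∀ n, P n (w n) = 0 := fun n =>
    eq_zero_of_norm_le_mul_exp hlam fun N => by
      have hk : n - N ≤ n := by omega
      have : P n (w n) = (E n (n - N)).comp (P (n - N)) (w (n - N)) := by
        rw [orbit n (n - N), proj_evolution_apply hE0 hE hP hk]
        rfl
      rw [this]
      exact decay _ _ N (by simpa using hstable n (n - N) hk)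
  have unstable_part : ∀ n, w n - P n (w n) = 0 := fun n =>
    eq_zero_of_norm_le_mul_exp hlam fun N => by
      have hk : n ≤ n + N := by omega
      have : w n - P n (w n) =
          (E n (n + N)).comp (ContinuousLinearMap.id ℝ X - P (n + N)) (w (n + N)) := by
        simp only [ContinuousLinearMap.comp_apply, sub_apply,
          ContinuousLinearMap.id_apply]
        rw [orbit (n + N) n, proj_evolution_apply hE0 hE hP hk, ← map_sub,
          evolution_leftInverse hE0 hE hB hk]
      rw [this]
      exact decay _ _ N (by simpa using hunstable n (n + N) hk)
  funext n
  simpa [stable_part n] using unstable_part n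

end Dichotomy

theorem orbit_eq_of_norm_sub_le {X : Type*} [NormedAddCommGroup X] [NormedSpace ℝ X]
    {A : ℤ → X ≃L[ℝ] X} {c : ℝ}
    (hrobust : ∀ B : ℤ → X →L[ℝ] X, (∀ m, ‖(A m : X →L[ℝ] X) - B m‖ ≤ c) → ExpDichotomy B)
    {G : ℤ → X ≃ X} (hG : ∀ n y z, ‖G n y - G n z - A n (y - z)‖ ≤ c / 2 * ‖y - z‖)
    {Y Z : ℤ → X} (hY : ∀ n, Y (n + 1) = G n (Y n)) (hZ : ∀ n, Z (n + 1) = G n (Z n))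
    {K : ℝ} (hK : ∀ n, ‖Y n - Z n‖ ≤ K) : Y = Z := by
  funext m
  by_contra hne
  set w : ℤ → X := fun n => Y n - Z n
  have hw_ne : ∀ n, w n ≠ 0 := fun n hn => hne (orbit_eq_of_eq hY hZ (sub_eq_zero.mp hn) m)
  choose B hB_inj hBw hB_norm using
    fun n => exists_injective_map_eq_norm_sub_le (A n) (hw_ne n) (hw_ne (n + 1))
  have hB_close : ∀ n, ‖(A n : X →L[ℝ] X) - B n‖ ≤ c := fun n => by
    rw [norm_sub_rev]
    refine le_of_mul_le_mul_right ?_ (norm_pos_iff.mpr (hw_ne n))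
    have := hG n (Y n) (Z n)
    rw [← hY, ← hZ] at this
    linarith [hB_norm n]
  exact hw_ne m (congrFun ((hrobust B hB_close).eq_zero_of_bounded_orbit hB_inj
    (fun n => (hBw n).symm) hK) m)

theorem grobman_hartman_injective_general {X : Type*} [NormedAddCommGroup X] [NormedSpace ℝ X]
    (A : ℤ → X ≃L[ℝ] X) (c : ℝ)
    (hrobust : ∀ B : ℤ → X →L[ℝ] X,
      (∀ m, ‖(A m : X →L[ℝ] X) - B m‖ ≤ c) → ExpDichotomy B)
    (D r : ℝ) :
    ∃ δ > (0 : ℝ), ∃ ε > (0 : ℝ),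
      ∀ (g : ℤ → X → X) (g' : ℤ → X → X →L[ℝ] X),
        (∀ n x, HasFDerivAt (g n) (g' n x) x) →
        (∀ n x, ‖g' n x‖ ≤ c / 2) →
        (∀ n x y, ‖g' n x - g' n y‖ ≤ D * ‖x - y‖ ^ r) →
        (∀ n x, ‖g n x‖ ≤ δ) →
        (∀ n, IsHomeomorph fun x => A n x + g n x) →
        ∀ h : ℤ → X → X,
          (∀ (m : ℤ) (x : X), h (m + 1) (A m x + g m x) = A m (h m x)) →
          (∀ (m : ℤ) (x : X), ‖h m x - x‖ ≤ ε) →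
          ∀ m : ℤ, Function.Injective (h m) := by
  refine ⟨1, one_pos, 1, one_pos, fun g g' hg hg' _ _ hG h hconj hclose m y z hyz => ?_⟩
  let G : ℤ → X ≃ X := fun n => Equiv.ofBijective _ (hG n).bijective
  have hG_lin : ∀ n y z, ‖G n y - G n z - A n (y - z)‖ ≤ c / 2 * ‖y - z‖ := fun n y z => by
    have : G n y - G n z - A n (y - z) = g n y - g n z := by
      simp only [G, Equiv.ofBijective_apply, map_sub]
      abel
    rw [this]
    exact convex_univ.norm_image_sub_le_of_norm_hasFDerivWithin_le
      (fun x _ => (hg n x).hasFDerivWithinAt) (fun x _ => hg' n x) trivial trivial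
  obtain ⟨Y, hYm, hY⟩ := exists_orbit G m y
  obtain ⟨Z, hZm, hZ⟩ := exists_orbit G m z
  have hh : ∀ n, h n (Y n) = h n (Z n) :=
    orbit_eq_of_eq (e := fun n => (A n).toEquiv) (fun n => by simp [hY, G, hconj])
      (fun n => by simp [hZ, G, hconj]) (n₀ := m) (by rw [hYm, hZm, hyz])
  have hYZ : ∀ n, ‖Y n - Z n‖ ≤ 1 + 1 := fun n => by
    refine (norm_sub_le_norm_sub_add_norm_sub _ (h n (Y n)) _).trans (add_le_add ?_ ?_)
    · rw [norm_sub_rev]; exact hclose n (Y n)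
    · rw [hh n]; exact hclose n (Z n)
  rw [← hYm, ← hZm, orbit_eq_of_norm_sub_le hrobust hG_lin hY hZ hYZ]

/-- In the setting of the nonautonomous Grobman–Hartman theorem, the conjugating maps are injective. -/
theorem grobman_hartman_injective {X : Type*} [NormedAddCommGroup X]
    [NormedSpace ℝ X] [CompleteSpace X]
    (A : ℤ → X ≃L[ℝ] X) (M : ℝ) (hM : ∀ m, ‖(A m : X →L[ℝ] X)‖ ≤ M)
    (hED : ExpDichotomy fun m => (A m : X →L[ℝ] X))
    (c : ℝ) (hc : 0 < c)
    (hrobust : ∀ B : ℤ → X →L[ℝ] X,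
      (∀ m, ‖(A m : X →L[ℝ] X) - B m‖ ≤ c) → ExpDichotomy B)
    (D r : ℝ) (hD : 0 < D) (hr : 0 < r) :
    ∃ δ > (0 : ℝ), ∃ ε > (0 : ℝ),
      ∀ (g : ℤ → X → X) (g' : ℤ → X → X →L[ℝ] X),
        (∀ n x, HasFDerivAt (g n) (g' n x) x) →
        (∀ n x, ‖g' n x‖ ≤ c / 2) →
        (∀ n x y, ‖g' n x - g' n y‖ ≤ D * ‖x - y‖ ^ r) →
        (∀ n x, ‖g n x‖ ≤ δ) →
        (∀ n, IsHomeomorph fun x => A n x + g n x) →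
        ∀ h : ℤ → X → X,
          (∀ (m : ℤ) (x : X), h (m + 1) (A m x + g m x) = A m (h m x)) →
          (∀ (m : ℤ) (x : X), ‖h m x - x‖ ≤ ε) →
          ∀ m : ℤ, Function.Injective (h m) :=
  grobman_hartman_injective_general A c hrobust D r
end

section
/- In the setting of the nonautonomous Grobman–Hartman theorem, the map $h_0$ is uniformly continuous in the following sense: for every $\rho>0$ there exists $\eta>0$ such that for all $y,z\in X$ with $\|y-z\|<\eta$ we have $\|h_0(y)-h_0(z)\|\le\rho$. -/
section Aux

variable {X : Type*} [NormedAddCommGroup X] [NormedSpace ℝ X]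

/-- Cocycle identity for the evolution family of an invertible linear system. -/
private lemma cocycleE (A : ℤ → X ≃L[ℝ] X) (E : ℤ → ℤ → X →L[ℝ] X)
    (hEid : ∀ n, E n n = ContinuousLinearMap.id ℝ X)
    (hErec : ∀ m n, E (m + 1) n = (A m : X →L[ℝ] X).comp (E m n))
    (m k n : ℤ) : (E m k).comp (E k n) = E m n := by
  refine Int.inductionOn' m k ?_ ?_ ?_
  · rw [hEid, ContinuousLinearMap.id_comp]
  · intro j _ ih
    rw [hErec j k, hErec j n, ContinuousLinearMap.comp_assoc, ih]
  · intro j _ ih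
    have h1 : E j k = (A (j - 1) : X →L[ℝ] X).comp (E (j - 1) k) := by
      have := hErec (j - 1) k; rwa [sub_add_cancel] at this
    have h2 : E j n = (A (j - 1) : X →L[ℝ] X).comp (E (j - 1) n) := by
      have := hErec (j - 1) n; rwa [sub_add_cancel] at this
    ext x
    apply (A (j - 1)).injective
    have h3 := DFunLike.congr_fun ih x
    rw [h1, h2] at h3
    simpa using h3

/-- The projections commute with the evolution family. -/
private lemma commPE (A : ℤ → X ≃L[ℝ] X) (E : ℤ → ℤ → X →L[ℝ] X) (P : ℤ → X →L[ℝ] X)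
    (hEid : ∀ n, E n n = ContinuousLinearMap.id ℝ X)
    (hErec : ∀ m n, E (m + 1) n = (A m : X →L[ℝ] X).comp (E m n))
    (hPA : ∀ m, (P (m + 1)).comp (A m : X →L[ℝ] X) = (A m : X →L[ℝ] X).comp (P m))
    (m n : ℤ) : (E m n).comp (P n) = (P m).comp (E m n) := by
  refine Int.inductionOn' m n ?_ ?_ ?_
  · rw [hEid, ContinuousLinearMap.id_comp, ContinuousLinearMap.comp_id]
  · intro j _ ih
    rw [hErec j n, ContinuousLinearMap.comp_assoc, ih, ← ContinuousLinearMap.comp_assoc,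
      ← hPA j, ContinuousLinearMap.comp_assoc]
  · intro j _ ih
    have h1 : E j n = (A (j - 1) : X →L[ℝ] X).comp (E (j - 1) n) := by
      have := hErec (j - 1) n; rwa [sub_add_cancel] at this
    have h2 : (P j).comp (A (j - 1) : X →L[ℝ] X)
        = (A (j - 1) : X →L[ℝ] X).comp (P (j - 1)) := by
      have := hPA (j - 1); rwa [sub_add_cancel] at this
    ext x
    apply (A (j - 1)).injective
    have h3 := DFunLike.congr_fun ih (x)
    rw [h1] at h3
    have h4 := DFunLike.congr_fun h2 ((E (j - 1) n) x)
    simp only [ContinuousLinearMap.comp_apply, ContinuousLinearEquiv.coe_coe] at h3 h4 ⊢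
    exact h3.trans h4

/-- Robustness of the dichotomy under perturbations of size `c` forces a uniform lower
bound `c‖x‖ ≤ ‖A n x‖`: otherwise a rank-one perturbation of size `≤ c` would fail to be
surjective, contradicting the right-invertibility forced by the dichotomy data. -/
private lemma lowerA (A : ℤ → X ≃L[ℝ] X) (c : ℝ) (hc : 0 < c)
    (hrobust : ∀ B : ℤ → X →L[ℝ] X,
      (∀ m, ‖(A m : X →L[ℝ] X) - B m‖ ≤ c) → ExpDichotomy B)
    (n : ℤ) (x : X) : c * ‖x‖ ≤ ‖A n x‖ := by
  rcases eq_or_ne x 0 with rfl | hx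
  · simp
  by_contra hlt
  push_neg at hlt
  have hxn : (0 : ℝ) < ‖x‖ := norm_pos_iff.mpr hx
  set v : X := ‖x‖⁻¹ • x with hv
  have hv1 : ‖v‖ = 1 := by
    rw [hv, norm_smul, norm_inv, norm_norm, inv_mul_cancel₀ hxn.ne']
  have hvne : v ≠ 0 := by
    intro h0; rw [h0, norm_zero] at hv1; norm_num at hv1
  obtain ⟨φ, hφ1, hφv⟩ := exists_dual_vector ℝ v (norm_ne_zero_iff.mpr hvne)
  have hAv : ‖A n v‖ < c := by
    have hsm : A n v = ‖x‖⁻¹ • A n x := by rw [hv, map_smul]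
    rw [hsm, norm_smul, norm_inv, norm_norm, inv_mul_lt_iff₀ hxn]
    linarith
  set B : ℤ → X →L[ℝ] X := fun m =>
    if m = n then (A n : X →L[ℝ] X) - φ.smulRight (A n v) else (A m : X →L[ℝ] X) with hB
  have hBle : ∀ m, ‖(A m : X →L[ℝ] X) - B m‖ ≤ c := by
    intro m
    by_cases hm : m = n
    · subst hm
      simp only [hB, if_pos rfl, sub_sub_cancel]
      rw [ContinuousLinearMap.norm_smulRight_apply, hφ1, one_mul]
      exact hAv.le
    · simp [hB, if_neg hm, hc.le]
  obtain ⟨E', P', C', l', -, -, hid', hrec', -⟩ := hrobust B hBle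
  have hkey : (B n).comp (E' n (n + 1)) = ContinuousLinearMap.id ℝ X :=
    (hrec' n (n + 1)).symm.trans (hid' (n + 1))
  have happ := DFunLike.congr_fun hkey ((A n) v)
  simp only [ContinuousLinearMap.comp_apply, ContinuousLinearMap.id_apply] at happ
  set u := (E' n (n + 1)) ((A n) v) with hu
  have hBn : B n u = (A n) (u - φ u • v) := by
    simp only [hB, if_pos rfl, ContinuousLinearMap.sub_apply,
      ContinuousLinearMap.smulRight_apply, map_sub, map_smul,
      ContinuousLinearEquiv.coe_coe]
  rw [hBn] at happ
  have heq : u - φ u • v = v := (A n).injective happ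
  have hφeq := congrArg φ heq
  simp only [map_sub, map_smul, smul_eq_mul] at hφeq
  rw [hφv, hv1] at hφeq
  norm_num at hφeq

end Aux

/-- In the setting of the nonautonomous Grobman–Hartman theorem, the conjugating map `h 0` is uniformly continuous: for every ρ > 0 there is η > 0 such that ‖y - z‖ < η implies ‖h 0 y - h 0 z‖ ≤ ρ. -/
theorem grobman_hartman_continuity {X : Type*} [NormedAddCommGroup X]
    [NormedSpace ℝ X] [CompleteSpace X]
    (A : ℤ → X ≃L[ℝ] X) (M : ℝ) (hM : ∀ m, ‖(A m : X →L[ℝ] X)‖ ≤ M)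
    (hED : ExpDichotomy fun m => (A m : X →L[ℝ] X))
    (c : ℝ) (hc : 0 < c)
    (hrobust : ∀ B : ℤ → X →L[ℝ] X,
      (∀ m, ‖(A m : X →L[ℝ] X) - B m‖ ≤ c) → ExpDichotomy B)
    (D r : ℝ) (hD : 0 < D) (hr : 0 < r) :
    ∃ δ > (0 : ℝ), ∃ ε > (0 : ℝ),
      ∀ (g : ℤ → X → X) (g' : ℤ → X → X →L[ℝ] X),
        (∀ n x, HasFDerivAt (g n) (g' n x) x) →
        (∀ n x, ‖g' n x‖ ≤ c / 2) →
        (∀ n x y, ‖g' n x - g' n y‖ ≤ D * ‖x - y‖ ^ r) →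
        (∀ n x, ‖g n x‖ ≤ δ) →
        (∀ n, IsHomeomorph fun x => A n x + g n x) →
        ∀ h : ℤ → X → X,
          (∀ (m : ℤ) (x : X), h (m + 1) (A m x + g m x) = A m (h m x)) →
          (∀ (m : ℤ) (x : X), ‖h m x - x‖ ≤ ε) →
          ∀ ρ > (0 : ℝ), ∃ η > (0 : ℝ), ∀ y z : X, ‖y - z‖ < η → ‖h 0 y - h 0 z‖ ≤ ρ := by
  obtain ⟨E, P, C, lam, hC, hlam, hEid, hErec0, hPproj, hPA0, hS, hU⟩ := hED
  have hErec : ∀ m n, E (m + 1) n = (A m : X →L[ℝ] X).comp (E m n) := hErec0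
  have hPA : ∀ m, (P (m + 1)).comp (A m : X →L[ℝ] X) = (A m : X →L[ℝ] X).comp (P m) := hPA0
  have hco := cocycleE A E hEid hErec
  have hcm := commPE A E P hEid hErec hPA
  have hA_lb : ∀ (n : ℤ) (x : X), c * ‖x‖ ≤ ‖A n x‖ := fun n x => lowerA A c hc hrobust n x
  refine ⟨1, one_pos, 1, one_pos, ?_⟩
  intro g g' hderiv hg'le _hHolder _hgbd hhomeo h hconj hclose ρ hρ
  have hM0 : (0 : ℝ) ≤ M := le_trans (norm_nonneg _) (hM 0)
  set L : ℝ := max (M + c / 2) (2 / c) with hLdef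
  have hLpos : 0 < L := lt_of_lt_of_le (by positivity) (le_max_right _ _)
  have hglip : ∀ (n : ℤ) (u w : X), ‖g n u - g n w‖ ≤ c / 2 * ‖u - w‖ := by
    intro n u w
    exact Convex.norm_image_sub_le_of_norm_hasFDerivWithin_le
      (fun x _ => (hderiv n x).hasFDerivWithinAt) (fun x _ => hg'le n x)
      convex_univ (Set.mem_univ w) (Set.mem_univ u)
  have hGub : ∀ (n : ℤ) (u w : X),
      ‖(A n u + g n u) - (A n w + g n w)‖ ≤ L * ‖u - w‖ := by
    intro n u w
    have h1 : (A n u + g n u) - (A n w + g n w) = A n (u - w) + (g n u - g n w) := by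
      rw [map_sub]; abel
    rw [h1]
    have h2 : ‖A n (u - w)‖ ≤ M * ‖u - w‖ := by
      have h3 : ‖(A n : X →L[ℝ] X) (u - w)‖ ≤ ‖(A n : X →L[ℝ] X)‖ * ‖u - w‖ :=
        ContinuousLinearMap.le_opNorm _ _
      have h4 := mul_le_mul_of_nonneg_right (hM n) (norm_nonneg (u - w))
      simpa using h3.trans h4
    calc ‖A n (u - w) + (g n u - g n w)‖
        ≤ ‖A n (u - w)‖ + ‖g n u - g n w‖ := norm_add_le _ _
      _ ≤ M * ‖u - w‖ + c / 2 * ‖u - w‖ := add_le_add h2 (hglip n u w)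
      _ = (M + c / 2) * ‖u - w‖ := by ring
      _ ≤ L * ‖u - w‖ := mul_le_mul_of_nonneg_right (le_max_left _ _) (norm_nonneg _)
  have hGlb : ∀ (n : ℤ) (u w : X),
      c / 2 * ‖u - w‖ ≤ ‖(A n u + g n u) - (A n w + g n w)‖ := by
    intro n u w
    have h1 : c * ‖u - w‖ ≤ ‖A n u - A n w‖ := by
      have := hA_lb n (u - w); rwa [map_sub] at this
    have h2 : ‖A n u - A n w‖ ≤ ‖(A n u + g n u) - (A n w + g n w)‖ + ‖g n u - g n w‖ := by
      have h3 : A n u - A n w = ((A n u + g n u) - (A n w + g n w)) - (g n u - g n w) := by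
        abel
      rw [h3]; exact norm_sub_le _ _
    have h4 := hglip n u w
    linarith
  obtain ⟨N, hNge⟩ := exists_nat_ge (6 * C / ρ / lam)
  have h6 : 6 * C / ρ < Real.exp (lam * N) := by
    have h1 : 6 * C / ρ ≤ (N : ℝ) * lam := (div_le_iff₀ hlam).mp hNge
    nlinarith [Real.add_one_le_exp (lam * (N : ℝ))]
  have hqpos := Real.exp_pos (lam * (N : ℝ))
  have hexp : 6 * C * (Real.exp (lam * N))⁻¹ ≤ ρ := by
    rw [show 6 * C * (Real.exp (lam * (N : ℝ)))⁻¹ = 6 * C / Real.exp (lam * N) by ring,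
      div_le_iff₀ hqpos]
    have := (div_lt_iff₀ hρ).mp h6
    nlinarith
  refine ⟨(L ^ N)⁻¹, by positivity, ?_⟩
  intro y z hyz
  have fwd : ∀ n : ℕ, ∃ u w : X, h n u = E n 0 (h 0 y) ∧ h n w = E n 0 (h 0 z) ∧
      ‖u - w‖ ≤ L ^ n * ‖y - z‖ := by
    intro n
    induction n with
    | zero => refine ⟨y, z, ?_, ?_, ?_⟩ <;> simp [hEid]
    | succ n ih =>
      obtain ⟨u, w, hu, hw, hd⟩ := ih
      refine ⟨A n u + g n u, A n w + g n w, ?_, ?_, ?_⟩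
      · have h1 := hconj (n : ℤ) u
        have h2 := hErec (n : ℤ) 0
        push_cast
        rw [h1, hu, h2]
        simp
      · have h1 := hconj (n : ℤ) w
        have h2 := hErec (n : ℤ) 0
        push_cast
        rw [h1, hw, h2]
        simp
      · calc ‖(A n u + g n u) - (A n w + g n w)‖ ≤ L * ‖u - w‖ := hGub n u w
          _ ≤ L * (L ^ n * ‖y - z‖) := mul_le_mul_of_nonneg_left hd hLpos.le
          _ = L ^ (n + 1) * ‖y - z‖ := by ring
  have bwd : ∀ n : ℕ, ∃ u w : X, h (-(n : ℤ)) u = E (-(n : ℤ)) 0 (h 0 y) ∧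
      h (-(n : ℤ)) w = E (-(n : ℤ)) 0 (h 0 z) ∧ ‖u - w‖ ≤ L ^ n * ‖y - z‖ := by
    intro n
    induction n with
    | zero => refine ⟨y, z, ?_, ?_, ?_⟩ <;> simp [hEid]
    | succ n ih =>
      obtain ⟨u, w, hu, hw, hd⟩ := ih
      obtain ⟨u', hu'⟩ := (hhomeo (-(n : ℤ) - 1)).bijective.2 u
      obtain ⟨w', hw'⟩ := (hhomeo (-(n : ℤ) - 1)).bijective.2 w
      have hu'' : A (-(n : ℤ) - 1) u' + g (-(n : ℤ) - 1) u' = u := hu'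
      have hw'' : A (-(n : ℤ) - 1) w' + g (-(n : ℤ) - 1) w' = w := hw'
      have hidx : (-(((n : ℕ) + 1 : ℕ) : ℤ)) = -(n : ℤ) - 1 := by push_cast; ring
      refine ⟨u', w', ?_, ?_, ?_⟩
      · rw [hidx]
        have h1 := hconj (-(n : ℤ) - 1) u'
        rw [sub_add_cancel, hu'', hu] at h1
        have h2 := hErec (-(n : ℤ) - 1) 0
        rw [sub_add_cancel] at h2
        apply (A (-(n : ℤ) - 1)).injective
        rw [← h1, h2]
        simp
      · rw [hidx]
        have h1 := hconj (-(n : ℤ) - 1) w'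
        rw [sub_add_cancel, hw'', hw] at h1
        have h2 := hErec (-(n : ℤ) - 1) 0
        rw [sub_add_cancel] at h2
        apply (A (-(n : ℤ) - 1)).injective
        rw [← h1, h2]
        simp
      · have h5 : c / 2 * ‖u' - w'‖ ≤ ‖u - w‖ := by
          have := hGlb (-(n : ℤ) - 1) u' w'
          rwa [hu'', hw''] at this
        have h6' : ‖u' - w'‖ ≤ 2 / c * ‖u - w‖ := by
          have h7 := mul_le_mul_of_nonneg_left h5 (le_of_lt (by positivity : (0 : ℝ) < 2 / c))
          calc ‖u' - w'‖ = 2 / c * (c / 2 * ‖u' - w'‖) := by field_simp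
            _ ≤ 2 / c * ‖u - w‖ := h7
        calc ‖u' - w'‖ ≤ 2 / c * ‖u - w‖ := h6'
          _ ≤ L * (L ^ n * ‖y - z‖) :=
            mul_le_mul (le_max_right _ _) hd (norm_nonneg _) hLpos.le
          _ = L ^ (n + 1) * ‖y - z‖ := by ring
  obtain ⟨u, w, hu, hw, hd⟩ := fwd N
  obtain ⟨u2, w2, hu2, hw2, hd2⟩ := bwd N
  have hLN : (0 : ℝ) < L ^ N := by positivity
  have hsep : ∀ d : ℝ, d ≤ L ^ N * ‖y - z‖ → d ≤ 1 := by
    intro d hdle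
    have h8 : L ^ N * ‖y - z‖ ≤ L ^ N * (L ^ N)⁻¹ := mul_le_mul_of_nonneg_left hyz.le hLN.le
    rw [mul_inv_cancel₀ hLN.ne'] at h8
    linarith
  have hd1 : ‖u - w‖ ≤ 1 := hsep _ hd
  have hd2' : ‖u2 - w2‖ ≤ 1 := hsep _ hd2
  set v : X := h 0 y - h 0 z with hvdef
  have hEv : ∀ (m : ℤ) (uu ww : X), h m uu = E m 0 (h 0 y) → h m ww = E m 0 (h 0 z) →
      ‖uu - ww‖ ≤ 1 → ‖E m 0 v‖ ≤ 3 := by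
    intro m uu ww huu hww hless
    have e : (E m 0) v = (h m uu - uu) + (uu - ww) + (ww - h m ww) := by
      rw [hvdef, map_sub, ← huu, ← hww]; abel
    rw [e]
    have t1 := hclose m uu
    have t2 : ‖ww - h m ww‖ ≤ 1 := by rw [norm_sub_rev]; exact hclose m ww
    calc ‖(h m uu - uu) + (uu - ww) + (ww - h m ww)‖
        ≤ ‖(h m uu - uu) + (uu - ww)‖ + ‖ww - h m ww‖ := norm_add_le _ _
      _ ≤ ‖h m uu - uu‖ + ‖uu - ww‖ + ‖ww - h m ww‖ := by
          have := norm_add_le (h m uu - uu) (uu - ww); linarith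
      _ ≤ 3 := by linarith
  have hEvN : ‖E (N : ℤ) 0 v‖ ≤ 3 := hEv N u w hu hw hd1
  have hEvN2 : ‖E (-(N : ℤ)) 0 v‖ ≤ 3 := hEv (-(N : ℤ)) u2 w2 hu2 hw2 hd2'
  have hbound1 : ‖(E 0 (-(N : ℤ))).comp (P (-(N : ℤ)))‖ ≤ C * Real.exp (-(lam * N)) := by
    have hb := hS 0 (-(N : ℤ)) (by omega)
    have hcast : ((0 - -(N : ℤ) : ℤ) : ℝ) = (N : ℝ) := by push_cast; ring
    rw [hcast] at hb
    calc ‖(E 0 (-(N : ℤ))).comp (P (-(N : ℤ)))‖ ≤ C * Real.exp (-lam * N) := hb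
      _ = C * Real.exp (-(lam * N)) := by ring_nf
  have hbound2 : ‖(E 0 (N : ℤ)).comp (ContinuousLinearMap.id ℝ X - P (N : ℤ))‖
      ≤ C * Real.exp (-(lam * N)) := by
    have hb := hU 0 (N : ℤ) (by omega)
    have hcast : (((N : ℤ) - 0 : ℤ) : ℝ) = (N : ℝ) := by push_cast; ring
    rw [hcast] at hb
    calc ‖(E 0 (N : ℤ)).comp (ContinuousLinearMap.id ℝ X - P (N : ℤ))‖
        ≤ C * Real.exp (-lam * N) := hb
      _ = C * Real.exp (-(lam * N)) := by ring_nf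
  have hPv : ‖(P 0) v‖ ≤ C * Real.exp (-(lam * N)) * 3 := by
    have c1 : (E 0 (-(N : ℤ))) ((E (-(N : ℤ)) 0) v) = v := by
      have := DFunLike.congr_fun (hco 0 (-(N : ℤ)) 0) v
      simpa [hEid] using this
    have c2 : (E 0 (-(N : ℤ))) ((P (-(N : ℤ))) ((E (-(N : ℤ)) 0) v))
        = (P 0) ((E 0 (-(N : ℤ))) ((E (-(N : ℤ)) 0) v)) := by
      simpa using DFunLike.congr_fun (hcm 0 (-(N : ℤ))) ((E (-(N : ℤ)) 0) v)
    have e1 : (P 0) v = ((E 0 (-(N : ℤ))).comp (P (-(N : ℤ)))) ((E (-(N : ℤ)) 0) v) := by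
      simp only [ContinuousLinearMap.comp_apply]
      rw [c2, c1]
    rw [e1]
    calc ‖((E 0 (-(N : ℤ))).comp (P (-(N : ℤ)))) ((E (-(N : ℤ)) 0) v)‖
        ≤ ‖(E 0 (-(N : ℤ))).comp (P (-(N : ℤ)))‖ * ‖(E (-(N : ℤ)) 0) v‖ :=
          ContinuousLinearMap.le_opNorm _ _
      _ ≤ C * Real.exp (-(lam * N)) * 3 :=
          mul_le_mul hbound1 hEvN2 (norm_nonneg _) (by positivity)
  have hQv : ‖v - (P 0) v‖ ≤ C * Real.exp (-(lam * N)) * 3 := by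
    have c1 : (E 0 (N : ℤ)) ((E (N : ℤ) 0) v) = v := by
      have := DFunLike.congr_fun (hco 0 (N : ℤ) 0) v
      simpa [hEid] using this
    have c2 : (E 0 (N : ℤ)) ((P (N : ℤ)) ((E (N : ℤ) 0) v))
        = (P 0) ((E 0 (N : ℤ)) ((E (N : ℤ) 0) v)) := by
      simpa using DFunLike.congr_fun (hcm 0 (N : ℤ)) ((E (N : ℤ) 0) v)
    have e2 : v - (P 0) v
        = ((E 0 (N : ℤ)).comp (ContinuousLinearMap.id ℝ X - P (N : ℤ))) ((E (N : ℤ) 0) v) := by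
      simp only [ContinuousLinearMap.comp_apply, ContinuousLinearMap.sub_apply,
        ContinuousLinearMap.id_apply, map_sub]
      rw [c1, c2, c1]
    rw [e2]
    calc ‖((E 0 (N : ℤ)).comp (ContinuousLinearMap.id ℝ X - P (N : ℤ))) ((E (N : ℤ) 0) v)‖
        ≤ ‖(E 0 (N : ℤ)).comp (ContinuousLinearMap.id ℝ X - P (N : ℤ))‖ * ‖(E (N : ℤ) 0) v‖ :=
          ContinuousLinearMap.le_opNorm _ _
      _ ≤ C * Real.exp (-(lam * N)) * 3 :=
          mul_le_mul hbound2 hEvN (norm_nonneg _) (by positivity)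
  have hvsplit : v = (P 0) v + (v - (P 0) v) := by abel
  calc ‖h 0 y - h 0 z‖ = ‖(P 0) v + (v - (P 0) v)‖ := by rw [← hvsplit]
    _ ≤ ‖(P 0) v‖ + ‖v - (P 0) v‖ := norm_add_le _ _
    _ ≤ C * Real.exp (-(lam * N)) * 3 + C * Real.exp (-(lam * N)) * 3 := add_le_add hPv hQv
    _ = 6 * C * (Real.exp (lam * N))⁻¹ := by rw [Real.exp_neg]; ring
    _ ≤ ρ := hexp
end
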